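/- arXiv:2412.13906 — 8 statements merged into one kernel-verified Lean document; each statement's English description precedes it below -/
import Mathlib

section
/- For an additive map f: F_{2^m} → F_{2^m}, if the subspace U = {(x, f(x)) : x in F_{2^m}} of (F_{2^m})^2 is scattered over F_2 (i.e., every F_{2^m}-line of (F_{2^m})^2 meets U in an F_2-subspace of dimension at most 1), then the pointset G(f) ∪ (ℓ_∞ \ D(f)) in PG(2, 2^m) is a hyperoval, where G(f) = {<(x, f(x), 1)> : x in F_{2^m}} and D(f) = {<(x, f(x), 0)> : x in F_{2^m}, x ≠ 0} ⊆ ℓ_∞. -/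
/-!
Scatteredness says that two nonzero graph vectors `(u, f u)`, `(v, f v)` are `K`-proportional
only if they are equal, i.e. `u * f v ≠ v * f u` for distinct nonzero `u`, `v`. Hence, with
`q = |K|`, `D(f)` consists of `q - 1` distinct points of the `q + 1` points of `ℓ_∞`, so
`ℓ_∞ \ D(f)` has two points and `S` has `q + 2`.

Three points of `S` cannot all lie on `ℓ_∞`, so one of them is on `G(f)`, and the determinant of
the three spanning vectors collapses to a `2 × 2` one. For three graph points it is
`u * f v - v * f u` with `u`, `v` two differences of abscissae; for two graph points and
`⟨(a, b, 0)⟩` it vanishes exactly when `⟨(a, b, 0)⟩` is the direction `⟨(u, f u, 0)⟩` of their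
difference, which lies in `D(f)`; for one graph point and two points of `ℓ_∞` it vanishes exactly
when the latter coincide.
-/

open Submodule Module
open scoped LinearAlgebra.Projectivization

namespace ScatteredGraph

variable {K : Type*} [Field K]

def IsScattered (f : K →+ K) : Prop :=
  ∀ ⦃u v : K⦄, u ≠ 0 → v ≠ 0 → u * f v = v * f u → u = v

def graphPoints (f : K →+ K) : Set (Submodule K (Fin 3 → K)) :=
  {P | ∃ x : K, P = K ∙ ![x, f x, 1]}

def directionPoints (f : K →+ K) : Set (Submodule K (Fin 3 → K)) :=
  {P | ∃ x : K, x ≠ 0 ∧ P = K ∙ ![x, f x, 0]}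

variable (K) in
def lineAtInfinity : Set (Submodule K (Fin 3 → K)) :=
  {P | ∃ a b : K, (a, b) ≠ (0, 0) ∧ P = K ∙ ![a, b, 0]}

def hyperovalOfGraph (f : K →+ K) : Set (Submodule K (Fin 3 → K)) :=
  graphPoints f ∪ (lineAtInfinity K \ directionPoints f)

def NoThreeCollinear (S : Set (Submodule K (Fin 3 → K))) : Prop :=
  ∀ P₁ ∈ S, ∀ P₂ ∈ S, ∀ P₃ ∈ S, P₁ ≠ P₂ → P₁ ≠ P₃ → P₂ ≠ P₃ → finrank K ↥(P₁ ⊔ P₂ ⊔ P₃) = 3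

theorem isScattered_of_finrank_eq_one {f : K →+ K}
    (hscatt : ∀ L : Submodule K (K × K), finrank K L = 1 →
      ∀ u v : K, (u, f u) ∈ L → (v, f v) ∈ L → u ≠ 0 → v ≠ 0 → u = v) :
    IsScattered f := by
  intro u v hu hv huv
  have hU : (u, f u) ≠ 0 := fun h => hu (congrArg Prod.fst h)
  refine hscatt _ (finrank_span_singleton hU) u v (mem_span_singleton_self _)
    (mem_span_singleton.mpr ⟨v / u, ?_⟩) hu hv
  ext
  · exact div_mul_cancel₀ v hu
  · simp only [Prod.smul_mk, smul_eq_mul]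
    rw [div_mul_eq_mul_div, ← huv, mul_div_cancel_left₀ _ hu]

section Points

theorem vec_zero_mem_span_vec_zero {a b c d : K} (hcd : (c, d) ≠ (0, 0)) (h : a * d = b * c) :
    ![a, b, 0] ∈ K ∙ ![c, d, 0] := by
  rw [mem_span_singleton]
  by_cases hc : c = 0
  · have hd : d ≠ 0 := fun hd => hcd (by rw [hc, hd])
    have ha : a = 0 := by simpa [hc, hd] using h
    refine ⟨b / d, ?_⟩
    simp [hc, ha, hd]
  · refine ⟨a / c, ?_⟩
    simp only [Matrix.smul_cons, Matrix.smul_empty, smul_eq_mul, mul_zero]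
    congr 2
    · exact div_mul_cancel₀ a hc
    · rw [div_mul_eq_mul_div, h, mul_div_cancel_right₀ _ hc]

theorem span_vec_zero_eq_span_vec_zero_iff {a b c d : K} (hab : (a, b) ≠ (0, 0))
    (hcd : (c, d) ≠ (0, 0)) : K ∙ ![a, b, 0] = K ∙ ![c, d, 0] ↔ a * d = b * c := by
  constructor
  · intro h
    obtain ⟨t, ht⟩ := mem_span_singleton.mp (h ▸ mem_span_singleton_self ![a, b, 0])
    simp only [Matrix.smul_cons, Matrix.smul_empty, smul_eq_mul, mul_zero,
      Matrix.vecCons_inj] at ht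
    obtain ⟨rfl, rfl, -⟩ := ht
    ring
  · intro h
    refine le_antisymm ?_ ?_ <;> rw [span_singleton_le_iff_mem]
    · exact vec_zero_mem_span_vec_zero hcd h
    · exact vec_zero_mem_span_vec_zero hab (by linear_combination -h)

theorem span_vec_one_ne_span_vec_zero (x y a b : K) : K ∙ ![x, y, 1] ≠ K ∙ ![a, b, 0] := by
  intro h
  obtain ⟨t, ht⟩ := mem_span_singleton.mp (h ▸ mem_span_singleton_self ![x, y, 1])
  simpa using congrFun ht 2

theorem span_vec_one_injective (f : K →+ K) :
    Function.Injective fun x : K => K ∙ ![x, f x, 1] := by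
  intro x y (hxy : K ∙ _ = K ∙ _)
  obtain ⟨t, ht⟩ := mem_span_singleton.mp (hxy ▸ mem_span_singleton_self ![x, f x, 1])
  simp only [Matrix.smul_cons, Matrix.smul_empty, smul_eq_mul, mul_one,
      Matrix.vecCons_inj] at ht
  obtain ⟨hx, -, rfl, -⟩ := ht
  rw [← hx, one_mul]

theorem disjoint_graphPoints_lineAtInfinity (f : K →+ K) :
    Disjoint (graphPoints f) (lineAtInfinity K) := by
  rw [Set.disjoint_left]
  rintro P ⟨x, rfl⟩ ⟨a, b, -, h⟩
  exact span_vec_one_ne_span_vec_zero x (f x) a b h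

theorem directionPoints_subset_lineAtInfinity (f : K →+ K) :
    directionPoints f ⊆ lineAtInfinity K := by
  rintro P ⟨x, hx, rfl⟩
  exact ⟨x, f x, fun h => hx (congrArg Prod.fst h), rfl⟩

end Points

section Counting

variable (K) in
def inclAtInfinity : K × K →ₗ[K] Fin 3 → K :=
  LinearMap.pi ![LinearMap.fst K K K, LinearMap.snd K K K, 0]

theorem inclAtInfinity_apply (v : K × K) : inclAtInfinity K v = ![v.1, v.2, 0] := by
  ext i; fin_cases i <;> rfl

theorem inclAtInfinity_injective : Function.Injective (inclAtInfinity K) := by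
  intro v w h
  simp only [inclAtInfinity_apply, Matrix.vecCons_inj] at h
  exact Prod.ext h.1 h.2.1

theorem lineAtInfinity_eq_range :
    lineAtInfinity K =
      Set.range (map (inclAtInfinity K) ∘ Projectivization.submodule (K := K) (V := K × K)) := by
  have hmap (v : K × K) : (K ∙ v).map (inclAtInfinity K) = K ∙ ![v.1, v.2, 0] := by
    rw [map_span, Set.image_singleton, inclAtInfinity_apply]
  ext P
  constructor
  · rintro ⟨a, b, hab, rfl⟩
    exact ⟨Projectivization.mk K (a, b) hab, by
      rw [Function.comp_apply, Projectivization.submodule_mk, hmap]⟩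
  · rintro ⟨p, rfl⟩
    exact ⟨p.rep.1, p.rep.2, p.rep_nonzero, by rw [Function.comp_apply, p.submodule_eq, hmap]⟩

theorem ncard_graphPoints (f : K →+ K) : (graphPoints f).ncard = Nat.card K := by
  have hrange : graphPoints f = Set.range fun x : K => K ∙ ![x, f x, 1] := by
    ext P
    simp only [graphPoints, Set.mem_ofPred_eq, Set.mem_range, eq_comm]
  rw [hrange, Set.ncard_range_of_injective (span_vec_one_injective f)]

variable [Finite K]

theorem ncard_lineAtInfinity : (lineAtInfinity K).ncard = Nat.card K + 1 := by
  rw [lineAtInfinity_eq_range, Set.ncard_range_of_injective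
    ((map_injective_of_injective inclAtInfinity_injective).comp
      Projectivization.submodule_injective)]
  exact Projectivization.card_of_finrank_two K (K × K) (by simp)

theorem ncard_directionPoints {f : K →+ K} (hs : IsScattered f) :
    (directionPoints f).ncard = Nat.card K - 1 := by
  have himage : directionPoints f = (fun x : K => K ∙ ![x, f x, 0]) '' {0}ᶜ := by
    ext P
    simp only [directionPoints, Set.mem_ofPred_eq, Set.mem_image, Set.mem_compl_singleton_iff,
      eq_comm]
  have hinj : Set.InjOn (fun x : K => K ∙ ![x, f x, 0]) {0}ᶜ := by
    intro x hx y hy hxy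
    have hx' : (x, f x) ≠ (0, 0) := fun h => hx (congrArg Prod.fst h)
    have hy' : (y, f y) ≠ (0, 0) := fun h => hy (congrArg Prod.fst h)
    refine hs hx hy ?_
    rw [(span_vec_zero_eq_span_vec_zero_iff hx' hy').mp hxy, mul_comm]
  rw [himage, hinj.ncard_image, Set.ncard_compl, Set.ncard_singleton]

theorem ncard_lineAtInfinity_diff_directionPoints {f : K →+ K} (hs : IsScattered f) :
    (lineAtInfinity K \ directionPoints f).ncard = 2 := by
  have hq : 0 < Nat.card K := Nat.card_pos
  rw [Set.ncard_sdiff (directionPoints_subset_lineAtInfinity f), ncard_lineAtInfinity,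
    ncard_directionPoints hs]
  omega

theorem ncard_hyperovalOfGraph {f : K →+ K} (hs : IsScattered f) :
    (hyperovalOfGraph f).ncard = Nat.card K + 2 := by
  rw [hyperovalOfGraph, Set.ncard_union_eq
      ((disjoint_graphPoints_lineAtInfinity f).mono_right Set.sdiff_subset),
    ncard_graphPoints, ncard_lineAtInfinity_diff_directionPoints hs]

end Counting

section Collinearity

theorem finrank_sup_span_eq_three_of_det_ne_zero {u v w : Fin 3 → K}
    (h : (Matrix.of ![u, v, w]).det ≠ 0) : finrank K ↥(K ∙ u ⊔ K ∙ v ⊔ K ∙ w) = 3 := by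
  have hli : LinearIndependent K ![u, v, w] := Matrix.linearIndependent_rows_of_det_ne_zero h
  have hspan : span K (Set.range ![u, v, w]) = K ∙ u ⊔ K ∙ v ⊔ K ∙ w := by
    rw [← span_union, ← span_union, Matrix.range_cons, Matrix.range_cons, Matrix.range_cons,
      Matrix.range_empty, Set.union_empty, Set.union_assoc]
  rw [← hspan, finrank_span_eq_card hli, Fintype.card_fin]

variable {f : K →+ K}

theorem finrank_sup_graph_graph_graph (hs : IsScattered f) {x y z : K} (hxy : x ≠ y)
    (hxz : x ≠ z) (hyz : y ≠ z) :
    finrank K ↥(K ∙ ![x, f x, 1] ⊔ K ∙ ![y, f y, 1] ⊔ K ∙ ![z, f z, 1]) = 3 := by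
  refine finrank_sup_span_eq_three_of_det_ne_zero ?_
  have hdet : (Matrix.of ![![x, f x, 1], ![y, f y, 1], ![z, f z, 1]]).det =
      (y - x) * f (z - x) - (z - x) * f (y - x) := by
    simp only [Matrix.det_fin_three, Matrix.of_apply, Matrix.cons_val, map_sub]
    ring
  rw [hdet, sub_ne_zero]
  exact fun h => hyz (sub_left_injective (hs (sub_ne_zero.2 hxy.symm) (sub_ne_zero.2 hxz.symm) h))

theorem finrank_sup_graph_graph_infinity {x y a b : K} (hxy : x ≠ y) (hab : (a, b) ≠ (0, 0))
    (hD : K ∙ ![a, b, 0] ∉ directionPoints f) :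
    finrank K ↥(K ∙ ![x, f x, 1] ⊔ K ∙ ![y, f y, 1] ⊔ K ∙ ![a, b, 0]) = 3 := by
  refine finrank_sup_span_eq_three_of_det_ne_zero ?_
  have hdet : (Matrix.of ![![x, f x, 1], ![y, f y, 1], ![a, b, 0]]).det =
      (y - x) * b - a * f (y - x) := by
    simp only [Matrix.det_fin_three, Matrix.of_apply, Matrix.cons_val, map_sub]
    ring
  have hu : y - x ≠ 0 := sub_ne_zero.2 hxy.symm
  rw [hdet, sub_ne_zero]
  intro h
  refine hD ⟨y - x, hu, (span_vec_zero_eq_span_vec_zero_iff hab ?_).mpr ?_⟩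
  · exact fun h => hu (congrArg Prod.fst h)
  · rw [← h, mul_comm]

theorem finrank_sup_graph_infinity_infinity {x a b c d : K} (hab : (a, b) ≠ (0, 0))
    (hcd : (c, d) ≠ (0, 0)) (hne : K ∙ ![a, b, 0] ≠ K ∙ ![c, d, 0]) :
    finrank K ↥(K ∙ ![x, f x, 1] ⊔ K ∙ ![a, b, 0] ⊔ K ∙ ![c, d, 0]) = 3 := by
  refine finrank_sup_span_eq_three_of_det_ne_zero ?_
  have hdet : (Matrix.of ![![x, f x, 1], ![a, b, 0], ![c, d, 0]]).det = a * d - b * c := by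
    simp only [Matrix.det_fin_three, Matrix.of_apply, Matrix.cons_val]
    ring
  rw [hdet, sub_ne_zero]
  exact fun h => hne ((span_vec_zero_eq_span_vec_zero_iff hab hcd).mpr h)

theorem finrank_sup_eq_three_of_mem_graphPoints (hs : IsScattered f)
    {P₁ P₂ P₃ : Submodule K (Fin 3 → K)} (h₁ : P₁ ∈ graphPoints f)
    (h₂ : P₂ ∈ hyperovalOfGraph f) (h₃ : P₃ ∈ hyperovalOfGraph f)
    (h₁₂ : P₁ ≠ P₂) (h₁₃ : P₁ ≠ P₃) (h₂₃ : P₂ ≠ P₃) : finrank K ↥(P₁ ⊔ P₂ ⊔ P₃) = 3 := by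
  have hinj := span_vec_one_injective f
  obtain ⟨x, rfl⟩ := h₁
  rcases h₂ with ⟨y, rfl⟩ | ⟨⟨a, b, hab, rfl⟩, hD₂⟩ <;>
    rcases h₃ with ⟨z, rfl⟩ | ⟨⟨c, d, hcd, rfl⟩, hD₃⟩
  · exact finrank_sup_graph_graph_graph hs (hinj.ne_iff.mp h₁₂) (hinj.ne_iff.mp h₁₃)
      (hinj.ne_iff.mp h₂₃)
  · exact finrank_sup_graph_graph_infinity (hinj.ne_iff.mp h₁₂) hcd hD₃
  · rw [sup_right_comm]
    exact finrank_sup_graph_graph_infinity (hinj.ne_iff.mp h₁₃) hab hD₂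
  · exact finrank_sup_graph_infinity_infinity hab hcd h₂₃

theorem noThreeCollinear_hyperovalOfGraph [Finite K] (hs : IsScattered f) :
    NoThreeCollinear (hyperovalOfGraph f) := by
  intro P₁ h₁ P₂ h₂ P₃ h₃ h₁₂ h₁₃ h₂₃
  by_cases g₁ : P₁ ∈ graphPoints f
  · exact finrank_sup_eq_three_of_mem_graphPoints hs g₁ h₂ h₃ h₁₂ h₁₃ h₂₃
  by_cases g₂ : P₂ ∈ graphPoints f
  · rw [sup_comm P₁]
    exact finrank_sup_eq_three_of_mem_graphPoints hs g₂ h₁ h₃ h₁₂.symm h₂₃ h₁₃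
  by_cases g₃ : P₃ ∈ graphPoints f
  · rw [sup_comm, ← sup_assoc]
    exact finrank_sup_eq_three_of_mem_graphPoints hs g₃ h₁ h₂ h₁₃.symm h₂₃.symm h₁₂
  have hsub : {P₁, P₂, P₃} ⊆ lineAtInfinity K \ directionPoints f := by
    rintro P (rfl | rfl | rfl)
    exacts [h₁.resolve_left g₁, h₂.resolve_left g₂, h₃.resolve_left g₃]
  have hcard := Set.ncard_le_ncard hsub
  rw [Set.ncard_eq_three.mpr ⟨P₁, P₂, P₃, h₁₂, h₁₃, h₂₃, rfl⟩,
    ncard_lineAtInfinity_diff_directionPoints hs] at hcard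
  omega

end Collinearity

end ScatteredGraph

open ScatteredGraph in
theorem scattered_graph_gives_hyperoval_general
    (K : Type*) [Field K] [Fintype K] (m : ℕ)
    (hcard : Fintype.card K = 2 ^ m)
    (f : K →+ K)
    (hscatt : ∀ L : Submodule K (K × K), Module.finrank K L = 1 →
      ∀ u v : K, (u, f u) ∈ L → (v, f v) ∈ L → u ≠ 0 → v ≠ 0 → u = v) :
    letI G : Set (Submodule K (Fin 3 → K)) :=
      {P | ∃ x : K, P = Submodule.span K {![x, f x, 1]}}
    letI D : Set (Submodule K (Fin 3 → K)) :=
      {P | ∃ x : K, x ≠ 0 ∧ P = Submodule.span K {![x, f x, 0]}}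
    letI linf : Set (Submodule K (Fin 3 → K)) :=
      {P | ∃ a b : K, (a, b) ≠ (0, 0) ∧ P = Submodule.span K {![a, b, 0]}}
    letI S : Set (Submodule K (Fin 3 → K)) := G ∪ (linf \ D)
    S.ncard = 2 ^ m + 2 ∧
      ∀ P₁ ∈ S, ∀ P₂ ∈ S, ∀ P₃ ∈ S, P₁ ≠ P₂ → P₁ ≠ P₃ → P₂ ≠ P₃ →
        Module.finrank K ((P₁ ⊔ P₂ ⊔ P₃ : Submodule K (Fin 3 → K))) = 3 := by
  have hs := isScattered_of_finrank_eq_one hscatt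
  refine ⟨?_, noThreeCollinear_hyperovalOfGraph hs⟩
  rw [← hcard, ← Nat.card_eq_fintype_card]
  exact ncard_hyperovalOfGraph hs

/-- Let `K = F_{2^m}` and let `f : K → K` be additive. If the graph
`U = {(x, f(x))} ⊆ K²` is scattered over `F_2` — i.e. every 1-dimensional `K`-subspace `L`
of `K²` contains at most one nonzero vector of `U` (equivalently `dim_{F_2}(U ∩ L) ≤ 1`) —
then the pointset `S = G(f) ∪ (ℓ_∞ \ D(f))` of `PG(2, 2^m)` is a hyperoval, where
`G(f) = {⟨(x, f(x), 1)⟩ : x ∈ K}`, `D(f) = {⟨(x, f(x), 0)⟩ : x ≠ 0} ⊆ ℓ_∞`, and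
`ℓ_∞ = {⟨(a,b,0)⟩ : (a,b) ≠ (0,0)}`: it has `2^m + 2` points, no three of them collinear
(any three distinct points among them span a 3-dimensional subspace of `K³`). -/
theorem scattered_graph_gives_hyperoval
    (K : Type*) [Field K] [Fintype K] (m : ℕ) (hm : 1 ≤ m)
    (hcard : Fintype.card K = 2 ^ m)
    (f : K →+ K)
    (hscatt : ∀ L : Submodule K (K × K), Module.finrank K L = 1 →
      ∀ u v : K, (u, f u) ∈ L → (v, f v) ∈ L → u ≠ 0 → v ≠ 0 → u = v) :
    letI G : Set (Submodule K (Fin 3 → K)) :=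
      {P | ∃ x : K, P = Submodule.span K {![x, f x, 1]}}
    letI D : Set (Submodule K (Fin 3 → K)) :=
      {P | ∃ x : K, x ≠ 0 ∧ P = Submodule.span K {![x, f x, 0]}}
    letI linf : Set (Submodule K (Fin 3 → K)) :=
      {P | ∃ a b : K, (a, b) ≠ (0, 0) ∧ P = Submodule.span K {![a, b, 0]}}
    letI S : Set (Submodule K (Fin 3 → K)) := G ∪ (linf \ D)
    S.ncard = 2 ^ m + 2 ∧
      ∀ P₁ ∈ S, ∀ P₂ ∈ S, ∀ P₃ ∈ S, P₁ ≠ P₂ → P₁ ≠ P₃ → P₂ ≠ P₃ →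
        Module.finrank K ((P₁ ⊔ P₂ ⊔ P₃ : Submodule K (Fin 3 → K))) = 3 :=
  scattered_graph_gives_hyperoval_general K m hcard f hscatt
end

section
/- The linear automorphism group of the generalized Gabidulin code G_{k,s,m} (with 1 < k < m, gcd(s,m)=1) is {ax : a in F_{q^m}^*}; in particular it has order q^m - 1. -/
variable (Fq Fqm : Type) [Field Fq] [Field Fqm] [Fintype Fq] [Fintype Fqm] [Algebra Fq Fqm]

/-- The q-polynomial `x ↦ x^(q^j)`, as an `F_q`-linear endomorphism of `F_{q^m}`. -/
noncomputable def qpow (j : ℕ) : Fqm →ₗ[Fq] Fqm where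
  toFun x := x ^ (Fintype.card Fq) ^ j
  map_add' x y := by
    haveI : CharP Fq (ringChar Fq) := ringChar.charP Fq
    obtain ⟨e, hp, hcard⟩ := FiniteField.card Fq (ringChar Fq)
    haveI : Fact (Nat.Prime (ringChar Fq)) := ⟨hp⟩
    haveI : CharP Fqm (ringChar Fq) :=
      charP_of_injective_algebraMap (algebraMap Fq Fqm).injective _
    simp only [hcard, ← pow_mul]
    exact add_pow_char_pow x y (ringChar Fq) (e * j)
  map_smul' c x := by
    simp only [Algebra.smul_def, RingHom.id_apply]
    rw [mul_pow, ← map_pow, FiniteField.pow_card_pow]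

/-- The generalized Gabidulin code `G_{k,s,m} = ⟨x, x^{q^s}, …, x^{q^{s(k-1)}}⟩_{F_{q^m}}`,
viewed inside `L_{m,q}[x] ≅ End_{F_q}(F_{q^m})` (an `F_{q^m}`-subspace, where `a • f = a·f(·)`). -/
noncomputable def gabidulin (k s : ℕ) : Submodule Fqm (Fqm →ₗ[Fq] Fqm) :=
  Submodule.span Fqm ((fun i => qpow Fq Fqm (s * i)) '' Set.Iio k)

/-- Linear equivalence of rank-metric codes in `L_{m,q}[x]`:
`C₁ = C₂ ∘ g` for an invertible q-polynomial `g`. -/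
def LinEquivCode (C₁ C₂ : Submodule Fqm (Fqm →ₗ[Fq] Fqm)) : Prop :=
  ∃ g : Fqm →ₗ[Fq] Fqm, Function.Bijective g ∧
    (C₁ : Set (Fqm →ₗ[Fq] Fqm)) = (fun f => f ∘ₗ g) '' (C₂ : Set (Fqm →ₗ[Fq] Fqm))
set_option linter.unusedSectionVars false

lemma qpow_apply (j : ℕ) (x : Fqm) : qpow Fq Fqm j x = x ^ (Fintype.card Fq) ^ j := rfl

lemma qpow_zero : qpow Fq Fqm 0 = LinearMap.id := by
  ext x; simp [qpow_apply]

lemma smul_lm_apply (a : Fqm) (f : Fqm →ₗ[Fq] Fqm) (x : Fqm) : (a • f) x = a * f x := rfl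

lemma card_Fqm {m : ℕ} (hrank : Module.finrank Fq Fqm = m) :
    Fintype.card Fqm = Fintype.card Fq ^ m := by
  rw [Module.card_eq_pow_finrank (K := Fq) (V := Fqm), hrank]

lemma qpow_congr {m : ℕ} (hrank : Module.finrank Fq Fqm = m) {e e' : ℕ}
    (h : e % m = e' % m) : qpow Fq Fqm e = qpow Fq Fqm e' := by
  have key : ∀ j : ℕ, qpow Fq Fqm j = qpow Fq Fqm (j % m) := by
    intro j
    ext x
    simp only [qpow_apply]
    conv_lhs => rw [← Nat.mod_add_div j m, pow_add, pow_mul, pow_mul]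
    rw [← card_Fqm Fq Fqm hrank, FiniteField.pow_card_pow]
  rw [key e, key e', h]
lemma qpow_pow_inj {m : ℕ} (hrank : Module.finrank Fq Fqm = m) (hm : 2 ≤ m)
    {j j' : ℕ} (hj : j < m) (hj' : j' < m)
    (h : ∀ x : Fqm, x ^ (Fintype.card Fq) ^ j = x ^ (Fintype.card Fq) ^ j') : j = j' := by
  classical
  have hq : 2 ≤ Fintype.card Fq := Fintype.one_lt_card
  obtain ⟨ζ, hζ⟩ := IsCyclic.exists_generator (α := Fqmˣ)
  have hord : orderOf ζ = Fintype.card Fq ^ m - 1 := by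
    rw [orderOf_eq_card_of_forall_mem_zpowers hζ, Nat.card_eq_fintype_card,
      Fintype.card_units, card_Fqm Fq Fqm hrank]
  have h2 : ζ ^ (Fintype.card Fq) ^ j = ζ ^ (Fintype.card Fq) ^ j' := by
    apply Units.ext
    push_cast
    exact h ζ.val
  have hmod := pow_eq_pow_iff_modEq.mp h2
  rw [hord] at hmod
  have hlt : ∀ i, i < m → Fintype.card Fq ^ i < Fintype.card Fq ^ m - 1 := by
    intro i hi
    have e0 : Fintype.card Fq ^ i ≤ Fintype.card Fq ^ (m - 1) :=
      Nat.pow_le_pow_right (by omega) (by omega)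
    have e1 : Fintype.card Fq ^ (m - 1) * Fintype.card Fq = Fintype.card Fq ^ m := by
      rw [← pow_succ]; congr 1; omega
    have e2 : 2 ≤ Fintype.card Fq ^ (m - 1) :=
      le_trans hq (Nat.le_self_pow (by omega) _)
    have e3 : Fintype.card Fq ^ (m - 1) * 2 ≤ Fintype.card Fq ^ m := by
      rw [← e1]; exact Nat.mul_le_mul_left _ hq
    omega
  have heq : (Fintype.card Fq) ^ j = (Fintype.card Fq) ^ j' := by
    have b1 := hlt j hj
    have b2 := hlt j' hj'
    unfold Nat.ModEq at hmod
    rwa [Nat.mod_eq_of_lt b1, Nat.mod_eq_of_lt b2] at hmod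
  exact Nat.pow_right_injective hq heq

noncomputable def coeLM : (Fqm →ₗ[Fq] Fqm) →ₗ[Fqm] (Fqm → Fqm) where
  toFun f := ⇑f
  map_add' _ _ := rfl
  map_smul' _ _ := rfl

lemma qpow_li {m : ℕ} (hrank : Module.finrank Fq Fqm = m) (hm : 2 ≤ m)
    {n : ℕ} (e : Fin n → ℕ) (he : ∀ i, e i < m) (hinj : Function.Injective e) :
    LinearIndependent Fqm (fun i => qpow Fq Fqm (e i)) := by
  have h0 := linearIndependent_monoidHom Fqm Fqm
  set P : Fin n → (Fqm →* Fqm) := fun i => powMonoidHom ((Fintype.card Fq) ^ (e i)) with hP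
  have hι : Function.Injective P := by
    intro i i' hii
    apply hinj
    refine qpow_pow_inj Fq Fqm hrank hm (he i) (he i') (fun x => ?_)
    exact congrFun (congrArg (fun f : Fqm →* Fqm => (f : Fqm → Fqm)) hii) x
  have h1 := h0.comp P hι
  have h2 : ((fun f : Fqm →* Fqm => (f : Fqm → Fqm)) ∘ P)
      = (⇑(coeLM Fq Fqm) ∘ fun i => qpow Fq Fqm (e i)) := rfl
  rw [h2] at h1
  exact LinearIndependent.of_comp (coeLM Fq Fqm) h1
lemma qpow_comp_qpow (i j : ℕ) :
    (qpow Fq Fqm j) ∘ₗ (qpow Fq Fqm i) = qpow Fq Fqm (i + j) := by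
  ext x
  simp [qpow_apply, ← pow_mul, ← pow_add]

lemma qpow_comp_smul (j : ℕ) (a : Fqm) (f : Fqm →ₗ[Fq] Fqm) :
    (qpow Fq Fqm j) ∘ₗ (a • f) =
      (a ^ (Fintype.card Fq) ^ j) • ((qpow Fq Fqm j) ∘ₗ f) := by
  ext x
  simp [qpow_apply, smul_lm_apply, mul_pow]

lemma qpow_comp_smul_id (j : ℕ) (a : Fqm) :
    (qpow Fq Fqm j) ∘ₗ (a • (LinearMap.id : Fqm →ₗ[Fq] Fqm)) =
      (a ^ (Fintype.card Fq) ^ j) • qpow Fq Fqm j := by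
  rw [qpow_comp_smul, LinearMap.comp_id]

lemma gab_eq (k s : ℕ) : gabidulin Fq Fqm k s =
    Submodule.span Fqm (Set.range fun i : Fin k => qpow Fq Fqm (s * i)) := by
  unfold gabidulin
  congr 1
  ext f
  constructor
  · rintro ⟨i, hi, rfl⟩
    exact ⟨⟨i, hi⟩, rfl⟩
  · rintro ⟨i, rfl⟩
    exact ⟨i.val, i.isLt, rfl⟩

lemma scalar_mem_aut (k s : ℕ) (a : Fqm) (ha : a ≠ 0) :
    Function.Bijective ⇑(a • (LinearMap.id : Fqm →ₗ[Fq] Fqm)) ∧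
    (fun f => f ∘ₗ (a • (LinearMap.id : Fqm →ₗ[Fq] Fqm))) ''
        (gabidulin Fq Fqm k s : Set (Fqm →ₗ[Fq] Fqm))
      = (gabidulin Fq Fqm k s : Set (Fqm →ₗ[Fq] Fqm)) := by
  constructor
  · constructor
    · intro x y hxy
      have h : a * x = a * y := hxy
      exact mul_left_cancel₀ ha h
    · intro y
      refine ⟨a⁻¹ * y, ?_⟩
      show a * (a⁻¹ * y) = y
      field_simp
  · set T : (Fqm →ₗ[Fq] Fqm) →ₗ[Fqm] (Fqm →ₗ[Fq] Fqm) :=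
      { toFun := fun f => f ∘ₗ (a • (LinearMap.id : Fqm →ₗ[Fq] Fqm))
        map_add' := fun f g => LinearMap.add_comp _ _ _
        map_smul' := fun c f => LinearMap.smul_comp _ _ _ } with hT
    have himg : (fun f => f ∘ₗ (a • (LinearMap.id : Fqm →ₗ[Fq] Fqm))) ''
        (gabidulin Fq Fqm k s : Set (Fqm →ₗ[Fq] Fqm))
        = ↑(Submodule.map T (gabidulin Fq Fqm k s)) := by
      rw [Submodule.map_coe]; rfl
    rw [himg]
    have hmap : Submodule.map T (gabidulin Fq Fqm k s) = gabidulin Fq Fqm k s := by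
      unfold gabidulin
      rw [Submodule.map_span]
      apply le_antisymm
      · rw [Submodule.span_le]
        rintro _ ⟨_, ⟨i, hi, rfl⟩, rfl⟩
        show T (qpow Fq Fqm (s * i)) ∈ _
        have : T (qpow Fq Fqm (s * i)) =
            (a ^ (Fintype.card Fq) ^ (s * i)) • qpow Fq Fqm (s * i) := by
          show (qpow Fq Fqm (s * i)) ∘ₗ _ = _
          exact qpow_comp_smul_id Fq Fqm (s * i) a
        rw [this]
        exact Submodule.smul_mem _ _ (Submodule.subset_span ⟨i, hi, rfl⟩)
      · rw [Submodule.span_le]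
        rintro _ ⟨i, hi, rfl⟩
        have hne : (a ^ (Fintype.card Fq) ^ (s * i)) ≠ 0 := pow_ne_zero _ ha
        have hTq : T (qpow Fq Fqm (s * i)) =
            (a ^ (Fintype.card Fq) ^ (s * i)) • qpow Fq Fqm (s * i) := by
          show (qpow Fq Fqm (s * i)) ∘ₗ _ = _
          exact qpow_comp_smul_id Fq Fqm (s * i) a
        have : qpow Fq Fqm (s * i) =
            (a ^ (Fintype.card Fq) ^ (s * i))⁻¹ • T (qpow Fq Fqm (s * i)) := by
          rw [hTq, inv_smul_smul₀ hne]
        show qpow Fq Fqm (s * i) ∈ _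
        rw [this]
        exact Submodule.smul_mem _ _
          (Submodule.subset_span (Set.mem_image_of_mem _ ⟨i, hi, rfl⟩))
    rw [hmap]
lemma comp_sum {ι : Type} (t : Finset ι) (f : Fqm →ₗ[Fq] Fqm)
    (v : ι → (Fqm →ₗ[Fq] Fqm)) :
    f ∘ₗ (∑ i ∈ t, v i) = ∑ i ∈ t, f ∘ₗ (v i) := by
  ext x
  simp only [LinearMap.coe_comp, Function.comp_apply, LinearMap.coe_sum,
    Finset.sum_apply, map_sum]

lemma two_sums_coeff {K M : Type} [Field K] [AddCommGroup M] [Module K M]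
    {n n' N : ℕ} (B : Fin N → M) (hBli : LinearIndependent K B)
    (u : Fin n → Fin N) (v : Fin n' → Fin N) (cu : Fin n → K) (cv : Fin n' → K)
    (h : ∑ i, cu i • B (u i) = ∑ i, cv i • B (v i)) (r : Fin N) :
    ∑ i ∈ Finset.univ.filter (fun i => u i = r), cu i
      = ∑ i ∈ Finset.univ.filter (fun i => v i = r), cv i := by
  classical
  have h1 : ∀ (n'' : ℕ) (w : Fin n'' → Fin N) (cw : Fin n'' → K),
      ∑ ρ : Fin N, (∑ i ∈ Finset.univ.filter (fun i => w i = ρ), cw i) • B ρ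
        = ∑ i, cw i • B (w i) := by
    intro n'' w cw
    rw [← Finset.sum_fiberwise Finset.univ w (fun i => cw i • B (w i))]
    refine Finset.sum_congr rfl fun ρ _ => ?_
    rw [Finset.sum_smul]
    refine Finset.sum_congr rfl fun i hi => ?_
    rw [(Finset.mem_filter.mp hi).2]
  have hz : ∑ ρ : Fin N,
      ((∑ i ∈ Finset.univ.filter (fun i => u i = ρ), cu i)
        - (∑ i ∈ Finset.univ.filter (fun i => v i = ρ), cv i)) • B ρ = 0 := by
    simp only [sub_smul, Finset.sum_sub_distrib]
    rw [h1 n u cu, h1 n' v cv, h, sub_self]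
  exact sub_eq_zero.mp (Fintype.linearIndependent_iff.mp hBli _ hz r)

lemma aut_subset_scalar {m k s : ℕ} (hrank : Module.finrank Fq Fqm = m)
    (hk1 : 1 < k) (hkm : k < m) (hs : Nat.Coprime s m)
    (g : Fqm →ₗ[Fq] Fqm) (hbij : Function.Bijective ⇑g)
    (himg : (fun f => f ∘ₗ g) '' (gabidulin Fq Fqm k s : Set (Fqm →ₗ[Fq] Fqm))
      = (gabidulin Fq Fqm k s : Set (Fqm →ₗ[Fq] Fqm))) :
    ∃ a : Fqm, a ≠ 0 ∧ g = a • (LinearMap.id : Fqm →ₗ[Fq] Fqm) := by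
  classical
  have hm0 : 0 < m := by omega
  have hm2 : 2 ≤ m := by omega
  -- the "basis" family of q-power maps
  have hBli : LinearIndependent Fqm (fun r : Fin m => qpow Fq Fqm ((s * r.val) % m)) := by
    refine qpow_li Fq Fqm hrank hm2 _ (fun r => Nat.mod_lt _ hm0) ?_
    intro r r' h
    have h1 : s * r.val ≡ s * r'.val [MOD m] := h
    have h2 := Nat.ModEq.cancel_left_of_coprime (Nat.coprime_comm.mp hs) h1
    have hmod : r.val % m = r'.val % m := h2
    exact Fin.ext (by rwa [Nat.mod_eq_of_lt r.isLt, Nat.mod_eq_of_lt r'.isLt] at hmod)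
  -- rewrite the generators of the code modulo m
  have hgen : ∀ N : ℕ, qpow Fq Fqm (s * N) = qpow Fq Fqm ((s * N) % m) :=
    fun N => qpow_congr Fq Fqm hrank (Nat.mod_mod_of_dvd _ dvd_rfl).symm
  have hgab : gabidulin Fq Fqm k s
      = Submodule.span Fqm (Set.range fun i : Fin k => qpow Fq Fqm ((s * i.val) % m)) := by
    rw [gab_eq]
    have heq : (fun i : Fin k => qpow Fq Fqm (s * i.val))
        = fun i : Fin k => qpow Fq Fqm ((s * i.val) % m) :=
      funext fun i => hgen i.val
    rw [heq]
  -- g belongs to the code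
  have hgmem : g ∈ gabidulin Fq Fqm k s := by
    have h0mem : qpow Fq Fqm 0 ∈ (gabidulin Fq Fqm k s : Set (Fqm →ₗ[Fq] Fqm)) := by
      have : qpow Fq Fqm (s * 0) ∈ (gabidulin Fq Fqm k s : Set (Fqm →ₗ[Fq] Fqm)) :=
        Submodule.subset_span ⟨0, by simpa using Nat.lt_of_lt_of_le Nat.zero_lt_one hk1.le, rfl⟩
      simpa using this
    have : g ∈ (fun f => f ∘ₗ g) '' (gabidulin Fq Fqm k s : Set (Fqm →ₗ[Fq] Fqm)) := by
      refine ⟨qpow Fq Fqm 0, h0mem, ?_⟩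
      show qpow Fq Fqm 0 ∘ₗ g = g
      rw [qpow_zero, LinearMap.id_comp]
    rw [himg] at this
    exact this
  rw [hgab] at hgmem
  obtain ⟨a, ha⟩ := (Submodule.mem_span_range_iff_exists_fun Fqm).mp hgmem
  -- all higher coefficients vanish
  have key : ∀ i0 : Fin k, 0 < i0.val → a i0 = 0 := by
    intro i0 hi0pos
    set j0 := k - i0.val with hj0def
    have hj0k : j0 < k := by omega
    -- composing the code with g lands in the code
    have hq1 : qpow Fq Fqm (s * j0) ∘ₗ g
        ∈ (gabidulin Fq Fqm k s : Set (Fqm →ₗ[Fq] Fqm)) := by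
      rw [← himg]
      exact ⟨qpow Fq Fqm (s * j0), Submodule.subset_span ⟨j0, hj0k, rfl⟩, rfl⟩
    -- compute the composition
    have hcomp : qpow Fq Fqm (s * j0) ∘ₗ g
        = ∑ i : Fin k, (a i ^ (Fintype.card Fq) ^ (s * j0))
            • qpow Fq Fqm ((s * ((i.val + j0) % m)) % m) := by
      rw [← ha, comp_sum]
      refine Finset.sum_congr rfl fun i _ => ?_
      rw [qpow_comp_smul, qpow_comp_qpow]
      congr 1
      apply qpow_congr Fq Fqm hrank
      have e1 : ((s * i.val) % m + s * j0) ≡ s * (i.val + j0) [MOD m] := by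
        rw [mul_add]
        exact Nat.ModEq.add_right _ (Nat.mod_modEq _ m)
      have e2 : s * (i.val + j0) ≡ s * ((i.val + j0) % m) [MOD m] :=
        (Nat.ModEq.mul_left s (Nat.mod_modEq _ m)).symm
      have e3 := e1.trans e2
      have e3' : ((s * i.val) % m + s * j0) % m = (s * ((i.val + j0) % m)) % m := e3
      rw [e3', Nat.mod_mod_of_dvd _ dvd_rfl]
    have hq2 : (∑ i : Fin k, (a i ^ (Fintype.card Fq) ^ (s * j0))
            • qpow Fq Fqm ((s * ((i.val + j0) % m)) % m))
        ∈ Submodule.span Fqm (Set.range fun i : Fin k => qpow Fq Fqm ((s * i.val) % m)) := by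
      rw [← hcomp, ← hgab]
      exact hq1
    obtain ⟨c, hc⟩ := (Submodule.mem_span_range_iff_exists_fun Fqm).mp hq2
    -- index maps into Fin m
    set u : Fin k → Fin m := fun i => ⟨(i.val + j0) % m, Nat.mod_lt _ hm0⟩ with hu
    set v : Fin k → Fin m := fun i => ⟨i.val, lt_trans i.isLt hkm⟩ with hv
    have hcoeff := two_sums_coeff (fun r : Fin m => qpow Fq Fqm ((s * r.val) % m)) hBli
      u v (fun i => a i ^ (Fintype.card Fq) ^ (s * j0)) c hc.symm ⟨k, hkm⟩
    -- the u-fiber of ⟨k, hkm⟩ is {i0}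
    have hfilu : Finset.univ.filter (fun i => u i = (⟨k, hkm⟩ : Fin m)) = {i0} := by
      ext i
      simp only [Finset.mem_filter, Finset.mem_univ, true_and, Finset.mem_singleton]
      constructor
      · intro hi
        have hval : (i.val + j0) % m = k := congrArg Fin.val hi
        have hik : i.val < k := i.isLt
        have hi0k : i0.val < k := i0.isLt
        rcases lt_or_ge (i.val + j0) m with hlt | hge
        · rw [Nat.mod_eq_of_lt hlt] at hval
          exact Fin.ext (by omega)
        · rw [Nat.mod_eq_sub_mod hge, Nat.mod_eq_of_lt (by omega)] at hval
          omega
      · intro hii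
        rw [hii]
        apply Fin.ext
        show (i0.val + j0) % m = k
        rw [hj0def, Nat.add_sub_cancel' i0.isLt.le]
        exact Nat.mod_eq_of_lt hkm
    -- the v-fiber of ⟨k, hkm⟩ is empty
    have hfilv : Finset.univ.filter (fun i => v i = (⟨k, hkm⟩ : Fin m)) = ∅ := by
      refine Finset.filter_false_of_mem (fun i _ hi => ?_)
      have : i.val = k := congrArg Fin.val hi
      omega
    rw [hfilu, hfilv, Finset.sum_singleton, Finset.sum_empty] at hcoeff
    have hexp : ((Fintype.card Fq) ^ (s * j0) : ℕ) ≠ 0 := by positivity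
    exact (pow_eq_zero_iff hexp).mp hcoeff
  -- conclude: g is scalar
  have hz : (⟨0, by omega⟩ : Fin k) ∈ (Finset.univ : Finset (Fin k)) := Finset.mem_univ _
  have hsum : g = a ⟨0, by omega⟩ • qpow Fq Fqm ((s * 0) % m) := by
    rw [← ha]
    refine Finset.sum_eq_single_of_mem _ hz (fun i _ hne => ?_)
    have hipos : 0 < i.val := by
      rcases Nat.eq_zero_or_pos i.val with h0 | hp
      · exact absurd (Fin.ext h0) hne
      · exact hp
    rw [key i hipos, zero_smul]
  have hzero : ((s * 0) % m : ℕ) = 0 := by simp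
  rw [hzero, qpow_zero] at hsum
  refine ⟨a ⟨0, by omega⟩, ?_, hsum⟩
  intro ha0
  rw [ha0, zero_smul] at hsum
  have h01 : g 1 = g 0 := by rw [hsum]; rfl
  exact one_ne_zero (hbij.injective h01)
/-- For `1 < k < m` and `gcd(s,m) = 1`, the linear automorphism group of the
generalized Gabidulin code `G_{k,s,m}` is `{ax : a ∈ F_{q^m}*}`; in particular it has
order `q^m - 1`. -/
theorem autlin_gabidulin
    (m k s : ℕ) (hrank : Module.finrank Fq Fqm = m)
    (hk1 : 1 < k) (hkm : k < m) (hs : Nat.Coprime s m) :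
    {g : Fqm →ₗ[Fq] Fqm | Function.Bijective g ∧
        (fun f => f ∘ₗ g) '' (gabidulin Fq Fqm k s : Set (Fqm →ₗ[Fq] Fqm))
          = (gabidulin Fq Fqm k s : Set (Fqm →ₗ[Fq] Fqm))}
      = {g : Fqm →ₗ[Fq] Fqm | ∃ a : Fqm, a ≠ 0 ∧ g = a • (LinearMap.id : Fqm →ₗ[Fq] Fqm)}
    ∧
    Set.ncard {g : Fqm →ₗ[Fq] Fqm | Function.Bijective g ∧
        (fun f => f ∘ₗ g) '' (gabidulin Fq Fqm k s : Set (Fqm →ₗ[Fq] Fqm))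
          = (gabidulin Fq Fqm k s : Set (Fqm →ₗ[Fq] Fqm))}
      = Fintype.card Fq ^ m - 1 := by
  have hseteq : {g : Fqm →ₗ[Fq] Fqm | Function.Bijective g ∧
        (fun f => f ∘ₗ g) '' (gabidulin Fq Fqm k s : Set (Fqm →ₗ[Fq] Fqm))
          = (gabidulin Fq Fqm k s : Set (Fqm →ₗ[Fq] Fqm))}
      = {g : Fqm →ₗ[Fq] Fqm | ∃ a : Fqm, a ≠ 0 ∧ g = a • (LinearMap.id : Fqm →ₗ[Fq] Fqm)} := by
    ext g
    simp only [Set.mem_setOf_eq]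
    constructor
    · rintro ⟨hbij, himg⟩
      exact aut_subset_scalar Fq Fqm hrank hk1 hkm hs g hbij himg
    · rintro ⟨a, ha, rfl⟩
      exact scalar_mem_aut Fq Fqm k s a ha
  refine ⟨hseteq, ?_⟩
  rw [hseteq]
  have himg2 : {g : Fqm →ₗ[Fq] Fqm | ∃ a : Fqm, a ≠ 0 ∧ g = a • (LinearMap.id : Fqm →ₗ[Fq] Fqm)}
      = (fun a : Fqm => a • (LinearMap.id : Fqm →ₗ[Fq] Fqm)) '' {a : Fqm | a ≠ 0} := by
    ext g
    constructor
    · rintro ⟨a, ha, rfl⟩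
      exact ⟨a, ha, rfl⟩
    · rintro ⟨a, ha, rfl⟩
      exact ⟨a, ha, rfl⟩
  rw [himg2]
  rw [Set.ncard_image_of_injOn (fun x _ y _ h => by
    have h1 := congrArg (fun f : Fqm →ₗ[Fq] Fqm => f 1) h
    simpa [smul_lm_apply] using h1)]
  have hset0 : {a : Fqm | a ≠ 0} = Set.univ \ {0} := by
    ext a
    simp
  rw [hset0, Set.ncard_diff (Set.subset_univ _), Set.ncard_univ, Set.ncard_singleton,
    Nat.card_eq_fintype_card, card_Fqm Fq Fqm hrank]
end

section
/- A 2-dimensional F_{q^m}-linear code C = ⟨f_1, f_2⟩_{F_{q^m}} ⊆ L_{m,q}[x] is MRD (i.e., every nonzero element has rank at least m-1) if and only if the F_q-subspace U_{f_1,f_2} = {(f_1(x), f_2(x)) : x in F_{q^m}} of (F_{q^m})^2 is a scattered F_q-subspace of dimension m. -/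
variable (Fq Fqm : Type) [Field Fq] [Field Fqm] [Fintype Fq] [Fintype Fqm] [Algebra Fq Fqm]

/-! For `v = (v₁, v₂) ≠ 0` put `g_v = v₂ f₁ - v₁ f₂`; by linear independence these are exactly
the nonzero codewords. The map `P x = (f₁ x, f₂ x)` carries `ker g_v` onto `U ∩ ⟨v⟩`, since
`(a, b) ∈ ⟨v⟩` iff `v₂ a = v₁ b`. So once `P` is injective, "rank `≥ m - 1`" (i.e.
`dim ker g_v ≤ 1`) is the scattered condition. Injectivity comes from `dim U = m` on one side;
on the MRD side, a nonzero `ker P` would lie strictly inside `ker g_v` for `v = P x ≠ 0`,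
forcing `dim ker g_v ≥ 2`. -/

open Module Submodule LinearMap

theorem Submodule.exists_ne_zero_eq_span_singleton {F W : Type*} [Field F] [AddCommGroup W]
    [Module F W] {L : Submodule F W} (hL : finrank F L = 1) : ∃ v ≠ 0, L = span F {v} := by
  have : FiniteDimensional F L := Module.finite_of_finrank_eq_succ hL
  obtain ⟨v, hvL, hv⟩ := (Submodule.ne_bot_iff L).mp fun h => by
    rw [h, finrank_bot] at hL
    exact zero_ne_one hL
  refine ⟨v, hv, (eq_of_le_of_finrank_eq ((span_singleton_le_iff_mem v L).mpr hvL) ?_).symm⟩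
  rw [finrank_span_singleton hv, hL]

theorem Prod.mem_span_singleton_iff {F : Type*} [Field F] {v : F × F} (hv : v ≠ 0) {w : F × F} :
    w ∈ span F {v} ↔ v.2 * w.1 = v.1 * w.2 := by
  rw [mem_span_singleton]
  constructor
  · rintro ⟨c, rfl⟩
    simp only [Prod.smul_fst, Prod.smul_snd, smul_eq_mul]
    ring
  · intro h
    by_cases h₁ : v.1 = 0
    · have h₂ : v.2 ≠ 0 := fun h₂ => hv (Prod.ext h₁ h₂)
      refine ⟨w.2 / v.2, Prod.ext ?_ ?_⟩
      · simpa [h₁, h₂, eq_comm] using h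
      · simp [h₂]
    · refine ⟨w.1 / v.1, Prod.ext ?_ ?_⟩
      · simp [h₁]
      · simp only [Prod.smul_snd, smul_eq_mul]
        field_simp
        linear_combination h

theorem sub_one_le_finrank_range_iff {K V W : Type*} [Field K] [AddCommGroup V] [Module K V]
    [FiniteDimensional K V] [AddCommGroup W] [Module K W] (f : V →ₗ[K] W) :
    finrank K V - 1 ≤ finrank K (range f) ↔ finrank K (ker f) ≤ 1 := by
  have := f.finrank_range_add_finrank_ker
  omega

theorem forall_mem_span_pair_ne_zero_iff {R M : Type*} [Ring R] [AddCommGroup M] [Module R M]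
    {x y : M} (hind : LinearIndependent R ![x, y]) (p : M → Prop) :
    (∀ z ∈ span R {x, y}, z ≠ 0 → p z) ↔ ∀ v : R × R, v ≠ 0 → p (v.2 • x - v.1 • y) := by
  constructor
  · intro h v hv
    refine h _ (mem_span_pair.mpr ⟨v.2, -v.1, by rw [neg_smul, ← sub_eq_add_neg]⟩) fun h0 => hv ?_
    obtain ⟨h₂, h₁⟩ :=
      LinearIndependent.pair_iff.mp hind v.2 (-v.1) (by rwa [neg_smul, ← sub_eq_add_neg])
    exact Prod.ext (neg_eq_zero.mp h₁) h₂
  · rintro h z hz hz0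
    obtain ⟨a, b, rfl⟩ := mem_span_pair.mp hz
    have hv : ((-b, a) : R × R) ≠ 0 := fun h0 => hz0 (by simp_all [Prod.ext_iff])
    simpa [sub_eq_add_neg] using h _ hv

section

variable {K F V : Type*} [Field K] [Field F] [Algebra K F] [AddCommGroup V] [Module K V]
  (f₁ f₂ : V →ₗ[K] F)

theorem map_ker_sub_smul_eq_range_inf {v : F × F} (hv : v ≠ 0) :
    (ker (v.2 • f₁ - v.1 • f₂)).map (f₁.prod f₂) =
      range (f₁.prod f₂) ⊓ (span F {v}).restrictScalars K := by
  ext w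
  simp only [mem_map, mem_ker, mem_inf, mem_range, restrictScalars_mem,
    Prod.mem_span_singleton_iff hv]
  constructor
  · rintro ⟨x, hx, rfl⟩
    simp only [LinearMap.sub_apply, LinearMap.smul_apply, smul_eq_mul, sub_eq_zero] at hx
    exact ⟨⟨x, rfl⟩, hx⟩
  · rintro ⟨⟨x, rfl⟩, hx⟩
    exact ⟨x, by simpa [sub_eq_zero] using hx, rfl⟩

theorem finrank_ker_sub_smul_eq_finrank_range_inf (hP : ker (f₁.prod f₂) = ⊥) {v : F × F}
    (hv : v ≠ 0) :
    finrank K (ker (v.2 • f₁ - v.1 • f₂)) =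
      finrank K ↥(range (f₁.prod f₂) ⊓ (span F {v}).restrictScalars K) := by
  rw [← map_ker_sub_smul_eq_range_inf f₁ f₂ hv]
  exact (equivMapOfInjective _ (ker_eq_bot.mp hP) _).finrank_eq

theorem ker_prod_eq_bot_of_finrank_ker_le_one [FiniteDimensional K V] (hf₁ : f₁ ≠ 0)
    (h : ∀ v : F × F, v ≠ 0 → finrank K (ker (v.2 • f₁ - v.1 • f₂)) ≤ 1) :
    ker (f₁.prod f₂) = ⊥ := by
  obtain ⟨x, hx⟩ : ∃ x, f₁ x ≠ 0 := by simpa [DFunLike.ne_iff] using hf₁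
  set v := f₁.prod f₂ x
  have hv : v ≠ 0 := fun h => hx (congrArg Prod.fst h)
  have hlt : ker (f₁.prod f₂) < ker (v.2 • f₁ - v.1 • f₂) := by
    refine SetLike.lt_iff_le_and_exists.mpr ⟨fun y hy => ?_, x, ?_, hv⟩
    · simp_all [Prod.ext_iff]
    · simp [v, mul_comm]
  have := (finrank_lt_finrank_of_lt hlt).trans_le (h v hv)
  exact finrank_eq_zero.mp (by omega)

end

/-- (Sheekey's criterion.) A 2-dimensional `F_{q^m}`-linear rank-metric code
`C = ⟨f₁, f₂⟩_{F_{q^m}} ⊆ L_{m,q}[x]` (with `f₁, f₂` linearly independent over `F_{q^m}`)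
is MRD — i.e. every nonzero element of `C` has rank at least `m - 1` — if and only if
`U_{f₁,f₂} = {(f₁(x), f₂(x)) : x ∈ F_{q^m}}` is a scattered `F_q`-subspace of `F_{q^m}²`
of dimension `m` (scattered: it meets every 1-dimensional `F_{q^m}`-subspace in an
`F_q`-subspace of dimension at most 1). -/
theorem MRD_iff_scattered
    (m : ℕ) (hrank : Module.finrank Fq Fqm = m)
    (f₁ f₂ : Fqm →ₗ[Fq] Fqm)
    (hind : LinearIndependent Fqm ![f₁, f₂]) :
    (∀ f ∈ Submodule.span Fqm {f₁, f₂}, f ≠ 0 →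
        m - 1 ≤ Module.finrank Fq (LinearMap.range f))
    ↔
    (Module.finrank Fq (LinearMap.range (LinearMap.prod f₁ f₂)) = m ∧
      ∀ L : Submodule Fqm (Fqm × Fqm), Module.finrank Fqm L = 1 →
        Module.finrank Fq
          ((LinearMap.range (LinearMap.prod f₁ f₂) ⊓ Submodule.restrictScalars Fq L :
            Submodule Fq (Fqm × Fqm))) ≤ 1) := by
  have : FiniteDimensional Fq Fqm := Module.Finite.of_finite
  subst hrank
  simp only [sub_one_le_finrank_range_iff]
  rw [forall_mem_span_pair_ne_zero_iff hind fun f => finrank Fq (ker f) ≤ 1]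
  constructor
  · intro h
    have hP := ker_prod_eq_bot_of_finrank_ker_le_one f₁ f₂ (hind.ne_zero 0) h
    refine ⟨finrank_range_of_inj (ker_eq_bot.mp hP), fun L hL => ?_⟩
    obtain ⟨v, hv, rfl⟩ := exists_ne_zero_eq_span_singleton hL
    exact finrank_ker_sub_smul_eq_finrank_range_inf f₁ f₂ hP hv ▸ h v hv
  · rintro ⟨hdim, hsc⟩ v hv
    have hP : ker (f₁.prod f₂) = ⊥ := by
      have := (f₁.prod f₂).finrank_range_add_finrank_ker
      exact finrank_eq_zero.mp (by omega)
    rw [finrank_ker_sub_smul_eq_finrank_range_inf f₁ f₂ hP hv]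
    exact hsc _ (finrank_span_singleton hv)
end

section
/- The limit as q → ∞ of δ^{rk}_3(4, 4, 2; q) = [ (1/2) q^7 (q^3-1)(q^2-1)(q-1)(q^3-q^2-q-1)(q^8-1)(q^4-1) ] / [ (q^{16}-1)(q^{12}-1) ] equals 1/2. -/
open Polynomial Filter

theorem Polynomial.tendsto_natCast_eval_div_eval_of_degree_eq {𝕜 : Type*} [NormedField 𝕜]
    [LinearOrder 𝕜] [IsStrictOrderedRing 𝕜] [OrderTopology 𝕜] [Archimedean 𝕜] {P Q : 𝕜[X]}
    (hdeg : P.degree = Q.degree) :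
    Tendsto (fun n : ℕ => P.eval (n : 𝕜) / Q.eval (n : 𝕜)) atTop
      (nhds (P.leadingCoeff / Q.leadingCoeff)) :=
  (div_tendsto_atTop_leadingCoeff_div_of_degree_eq P Q hdeg).comp tendsto_natCast_atTop_atTop

/-- `M(q) (q^8 - 1) (q^4 - 1)`, the number of MRD subspaces times the denominator of the
Gaussian binomial. -/
noncomputable def mrdDensityNumerator : ℝ[X] :=
  C (1 / 2) * (X ^ 7 * (X ^ 3 - 1) * (X ^ 2 - 1) * (X - 1) *
    (X ^ 3 - X ^ 2 - X - 1) * (X ^ 8 - 1) * (X ^ 4 - 1))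

noncomputable def mrdDensityDenominator : ℝ[X] := (X ^ 16 - 1) * (X ^ 12 - 1)

theorem degree_mrdDensityNumerator : mrdDensityNumerator.degree = 28 := by
  unfold mrdDensityNumerator; compute_degree!

theorem degree_mrdDensityDenominator : mrdDensityDenominator.degree = 28 := by
  unfold mrdDensityDenominator; compute_degree!

theorem leadingCoeff_mrdDensityNumerator : mrdDensityNumerator.leadingCoeff = 1 / 2 := by
  rw [mrdDensityNumerator, leadingCoeff_mul, leadingCoeff_C, Monic.leadingCoeff (by monicity!),
    mul_one]

theorem monic_mrdDensityDenominator : mrdDensityDenominator.Monic := by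
  unfold mrdDensityDenominator; monicity!

/-- The density of 2-dimensional MRD codes in `F_{q^4}^4`,
`δ^rk_3(4,4,2;q) = (1/2) q^7 (q^3-1)(q^2-1)(q-1)(q^3-q^2-q-1)(q^8-1)(q^4-1)
                    / ((q^{16}-1)(q^{12}-1))`,
tends to `1/2` as `q → ∞`. -/
theorem density_MRD_m4_tendsto_half :
    Filter.Tendsto
      (fun q : ℕ =>
        (1 / 2 : ℝ) * (q : ℝ) ^ 7 * ((q : ℝ) ^ 3 - 1) * ((q : ℝ) ^ 2 - 1) * ((q : ℝ) - 1) *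
            ((q : ℝ) ^ 3 - (q : ℝ) ^ 2 - (q : ℝ) - 1) * ((q : ℝ) ^ 8 - 1) * ((q : ℝ) ^ 4 - 1) /
          (((q : ℝ) ^ 16 - 1) * ((q : ℝ) ^ 12 - 1)))
      Filter.atTop (nhds (1 / 2)) := by
  have h := tendsto_natCast_eval_div_eval_of_degree_eq
    (degree_mrdDensityNumerator.trans degree_mrdDensityDenominator.symm)
  rw [leadingCoeff_mrdDensityNumerator, monic_mrdDensityDenominator.leadingCoeff, div_one] at h
  simpa [mrdDensityNumerator, mrdDensityDenominator, mul_assoc] using h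
end

section
/- Let k ≥ 2 and let α, β in F_{q^m} both generate F_{q^m} over F_q. Then the codes with generator matrices G = (I_k | αI_k | ... | α^{m-1}I_k) and G' = (I_k | βI_k | ... | β^{m-1}I_k) are linearly equivalent; i.e., there exists A in GL_{mk}(F_q) with GA = G'. Consequently there is exactly one linear equivalence class of one-weight [mk, k, m] rank-metric codes over F_{q^m}. -/
/-!
The columns `α ^ j • e_i` of `(I_k | αI_k | … | α^{m-1}I_k)` form an `F_q`-basis of
`F_{q^m}^k`, and two generator matrices whose columns are `F_q`-bases differ by the invertible
change-of-basis matrix. For a one-weight code the columns of any generator matrix `G` also form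
an `F_q`-basis: otherwise some nonzero `F_q`-functional kills them all, it is of the form
`y ↦ ψ (x ⬝ᵥ y)` for a fixed nonzero `ψ : F_{q^m} → F_q` and some `x ≠ 0`, and then every entry
of the codeword `x ᵥ* G` lies in `ker ψ`, so its rank is less than `m`.
-/

open Module

/-- The generator matrix `(I_k | αI_k | … | α^{m-1}I_k)`, with the `mk` columns indexed by
`Fin m × Fin k` (block `j`, column `i'`). -/
def oneWeightGen (Fq Fqm : Type*) [Field Fq] [Field Fqm] [Algebra Fq Fqm]
    (m k : ℕ) (α : Fqm) : Matrix (Fin k) (Fin m × Fin k) Fqm :=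
  fun i jc => α ^ (jc.1 : ℕ) * (if i = jc.2 then 1 else 0)

section

open Matrix Set Submodule

variable {F K ι κ : Type*} [Field F] [Field K] [Algebra F K]

theorem Module.Basis.transpose_mul_toMatrix_map [Fintype κ] [DecidableEq κ]
    (b b' : Basis κ F (ι → K)) :
    (of ⇑b)ᵀ * (b.toMatrix b').map (algebraMap F K) = (of ⇑b')ᵀ := by
  ext i j
  rw [transpose_apply, of_apply, ← b.sum_toMatrix_smul_self b' j]
  simp [Matrix.mul_apply, Finset.sum_apply, Algebra.smul_def, mul_comm]

theorem Module.Basis.exists_isUnit_transpose_mul_map_eq [Fintype κ] [DecidableEq κ]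
    (b b' : Basis κ F (ι → K)) :
    ∃ A : Matrix κ κ F, IsUnit A ∧ (of ⇑b)ᵀ * A.map (algebraMap F K) = (of ⇑b')ᵀ :=
  haveI := b.invertibleToMatrix b'
  ⟨b.toMatrix b', isUnit_of_invertible _, b.transpose_mul_toMatrix_map b'⟩

theorem Module.Dual.exists_dotProduct_eq [FiniteDimensional F K] [Fintype ι] [DecidableEq ι]
    {ψ : Dual F K} (hψ : ψ ≠ 0) (φ : Dual F (ι → K)) :
    ∃ x : ι → K, ∀ y, φ y = ψ (x ⬝ᵥ y) := by
  let Θ : (ι → K) →ₗ[F] Dual F (ι → K) :=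
    LinearMap.mk₂ F (fun x y => ψ (x ⬝ᵥ y)) (by simp [add_dotProduct])
      (by simp [smul_dotProduct]) (by simp [dotProduct_add]) (by simp [dotProduct_smul])
  have hinj : Function.Injective Θ := by
    rw [← LinearMap.ker_eq_bot, LinearMap.ker_eq_bot']
    intro x hx
    by_contra hx0
    obtain ⟨i, hi⟩ := Function.ne_iff.mp hx0
    apply hψ
    ext z
    simpa [Θ, mul_inv_cancel_left₀ hi] using LinearMap.congr_fun hx (Pi.single i ((x i)⁻¹ * z))
  obtain ⟨x, hx⟩ :=
    (LinearMap.injective_iff_surjective_of_finrank_eq_finrank Subspace.dual_finrank_eq.symm).mp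
      hinj φ
  exact ⟨x, fun y => (LinearMap.congr_fun hx y).symm⟩

theorem span_range_transpose_eq_top [FiniteDimensional F K] [Fintype ι] (G : Matrix ι κ K)
    (hG : ∀ x : ι → K, x ≠ 0 → span F (range (x ᵥ* G)) = ⊤) :
    span F (range Gᵀ) = ⊤ := by
  classical
  by_contra hne
  obtain ⟨φ, hφ0, hφ⟩ := exists_dual_map_eq_bot_of_lt_top (lt_top_iff_ne_top.mpr hne) inferInstance
  obtain ⟨ψ, hψ⟩ : ∃ ψ : Dual F K, ψ 1 ≠ 0 := by
    simpa using (forall_dual_apply_eq_zero_iff F (1 : K)).not.mpr one_ne_zero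
  have hψ0 : ψ ≠ 0 := fun h => hψ (by simp [h])
  obtain ⟨x, hx⟩ := Module.Dual.exists_dotProduct_eq hψ0 φ
  have hx0 : x ≠ 0 := by
    rintro rfl
    exact hφ0 (LinearMap.ext fun y => by simp [hx])
  have hker : span F (range (x ᵥ* G)) ≤ LinearMap.ker ψ := by
    rw [span_le]
    rintro _ ⟨j, rfl⟩
    have : φ (Gᵀ j) = 0 := by
      rw [← mem_bot F, ← hφ]
      exact mem_map_of_mem (subset_span ⟨j, rfl⟩)
    rwa [hx] at this
  rw [hG x hx0, top_le_iff, LinearMap.ker_eq_top] at hker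
  exact hψ0 hker

theorem Module.Basis.coe_submodule_eq_range_vecMul [Fintype ι] {C : Submodule K (κ → K)}
    (b : Basis ι K C) : (C : Set (κ → K)) = range fun x => x ᵥ* of fun i => (b i : κ → K) := by
  ext v
  have hspan : span K (range fun i => (b i : κ → K)) = C := by
    rw [range_comp' Subtype.val b, ← C.coe_subtype, ← map_span, b.span_eq, map_subtype_top]
  simp only [← hspan, SetLike.mem_coe, mem_span_range_iff_exists_fun, vecMul_eq_sum, mem_range]
  rfl

theorem Module.Basis.vecMul_ne_zero [Fintype ι] {C : Submodule K (κ → K)} (b : Basis ι K C)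
    {x : ι → K} (hx : x ≠ 0) : (x ᵥ* of fun i => (b i : κ → K)) ≠ 0 := by
  have hli := b.linearIndependent.map' C.subtype C.ker_subtype
  rw [vecMul_eq_sum]
  intro h
  exact hx (funext (Fintype.linearIndependent_iff.mp hli x h))

theorem exists_basis_transpose_eq_of_forall_span_eq_top [FiniteDimensional F K] [Fintype ι]
    [Fintype κ] {C : Submodule K (κ → K)} (b : Basis ι K C)
    (hcard : Fintype.card κ = Fintype.card ι * finrank F K)
    (hw : ∀ v ∈ C, v ≠ 0 → span F (range v) = ⊤) :
    ∃ bc : Basis κ F (ι → K), (of ⇑bc)ᵀ = of fun i => (b i : κ → K) := by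
  have hspan : span F (range (of fun i => (b i : κ → K))ᵀ) = ⊤ := by
    refine span_range_transpose_eq_top _ fun x hx => hw _ ?_ (b.vecMul_ne_zero hx)
    rw [← SetLike.mem_coe, b.coe_submodule_eq_range_vecMul]
    exact mem_range_self x
  have hcard' : Fintype.card κ = finrank F (ι → K) := by
    rw [hcard, Module.finrank_pi_fintype]
    simp
  refine ⟨basisOfTopLeSpanOfCardEqFinrank _ hspan.ge hcard', ?_⟩
  ext i j
  exact congrFun (congrFun (coe_basisOfTopLeSpanOfCardEqFinrank _ hspan.ge hcard') j) i

theorem exists_isUnit_eq_image_vecMul_map [FiniteDimensional F K] [Fintype κ] [DecidableEq κ]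
    {n : ℕ} (hcard : Fintype.card κ = n * finrank F K) {C₁ C₂ : Submodule K (κ → K)}
    (hC₁ : finrank K C₁ = n) (hC₂ : finrank K C₂ = n)
    (hw₁ : ∀ v ∈ C₁, v ≠ 0 → span F (range v) = ⊤)
    (hw₂ : ∀ v ∈ C₂, v ≠ 0 → span F (range v) = ⊤) :
    ∃ A : Matrix κ κ F, IsUnit A ∧
      (C₁ : Set (κ → K)) = (fun v => v ᵥ* A.map (algebraMap F K)) '' C₂ := by
  let b₁ := finBasisOfFinrankEq K C₁ hC₁
  let b₂ := finBasisOfFinrankEq K C₂ hC₂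
  rw [← Fintype.card_fin n] at hcard
  obtain ⟨bc₁, hbc₁⟩ := exists_basis_transpose_eq_of_forall_span_eq_top b₁ hcard hw₁
  obtain ⟨bc₂, hbc₂⟩ := exists_basis_transpose_eq_of_forall_span_eq_top b₂ hcard hw₂
  obtain ⟨A, hA, hmul⟩ := bc₂.exists_isUnit_transpose_mul_map_eq bc₁
  refine ⟨A, hA, ?_⟩
  rw [b₁.coe_submodule_eq_range_vecMul, b₂.coe_submodule_eq_range_vecMul, ← range_comp, ← hbc₁,
    ← hbc₂, ← hmul]
  ext v
  simp [vecMul_vecMul]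

theorem exists_basis_pow_of_adjoin_eq_top [FiniteDimensional F K] {m : ℕ}
    (hrank : finrank F K = m) {α : K} (hα : Algebra.adjoin F {α} = ⊤) :
    ∃ b : Basis (Fin m) F K, ∀ j, b j = α ^ (j : ℕ) := by
  let pb := PowerBasis.ofAdjoinEqTop' (IsIntegral.of_finite F α) hα
  have hdim : pb.dim = m := by rw [← pb.finrank, hrank]
  refine ⟨pb.basis.reindex (finCongr hdim), fun j => ?_⟩
  rw [Basis.reindex_apply, pb.basis_eq_pow, PowerBasis.ofAdjoinEqTop'_gen]
  rfl

theorem oneWeightGen_eq_transpose {m k : ℕ} {α : K} (b : Basis (Fin m) F K)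
    (hb : ∀ j, b j = α ^ (j : ℕ)) :
    oneWeightGen F K m k α = (of ⇑(b.smulTower (Pi.basisFun K (Fin k))))ᵀ := by
  ext i jc
  simp [oneWeightGen, hb, Pi.single_apply]

end

theorem oneWeight_codes_single_class_general
    (Fq Fqm : Type*) [Field Fq] [Field Fqm] [Algebra Fq Fqm]
    (m k : ℕ) (hm : 1 ≤ m) (hrank : finrank Fq Fqm = m)
    (α β : Fqm) (hα : Algebra.adjoin Fq ({α} : Set Fqm) = ⊤)
    (hβ : Algebra.adjoin Fq ({β} : Set Fqm) = ⊤) :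
    (∃ A : Matrix (Fin m × Fin k) (Fin m × Fin k) Fq, IsUnit A ∧
        oneWeightGen Fq Fqm m k α * A.map (algebraMap Fq Fqm) = oneWeightGen Fq Fqm m k β)
    ∧
    (∀ C₁ C₂ : Submodule Fqm ((Fin m × Fin k) → Fqm),
      finrank Fqm C₁ = k → finrank Fqm C₂ = k →
      (∀ v ∈ C₁, v ≠ 0 → finrank Fq (Submodule.span Fq (Set.range v)) = m) →
      (∀ v ∈ C₂, v ≠ 0 → finrank Fq (Submodule.span Fq (Set.range v)) = m) →
      ∃ A : Matrix (Fin m × Fin k) (Fin m × Fin k) Fq, IsUnit A ∧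
        (C₁ : Set ((Fin m × Fin k) → Fqm)) =
          (fun v => Matrix.vecMul v (A.map (algebraMap Fq Fqm))) '' (C₂ : Set _)) := by
  have : FiniteDimensional Fq Fqm := Module.finite_of_finrank_pos (by omega)
  have hfull : ∀ v : Fin m × Fin k → Fqm,
      finrank Fq (Submodule.span Fq (Set.range v)) = m → Submodule.span Fq (Set.range v) = ⊤ :=
    fun v hv => Submodule.eq_top_of_finrank_eq (hv.trans hrank.symm)
  constructor
  · obtain ⟨bα, hbα⟩ := exists_basis_pow_of_adjoin_eq_top hrank hα
    obtain ⟨bβ, hbβ⟩ := exists_basis_pow_of_adjoin_eq_top hrank hβ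
    rw [oneWeightGen_eq_transpose bα hbα, oneWeightGen_eq_transpose bβ hbβ]
    exact Basis.exists_isUnit_transpose_mul_map_eq _ _
  · intro C₁ C₂ hC₁ hC₂ hw₁ hw₂
    exact exists_isUnit_eq_image_vecMul_map (by simp [hrank, mul_comm]) hC₁ hC₂
      (fun v hv hv0 => hfull v (hw₁ v hv hv0)) (fun v hv hv0 => hfull v (hw₂ v hv hv0))

/-- Let `k ≥ 2` and let `α, β ∈ F_{q^m}` both generate `F_{q^m}` over
`F_q`. Then the generator matrices `G = (I_k|αI_k|…|α^{m-1}I_k)` and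
`G' = (I_k|βI_k|…|β^{m-1}I_k)` satisfy `GA = G'` for some `A ∈ GL_{mk}(F_q)`.
Consequently, any two one-weight `[mk, k, m]` rank-metric codes over `F_{q^m}`
(`k`-dimensional subspaces of `F_{q^m}^{mk}` all of whose nonzero codewords have rank
weight exactly `m`) are linearly equivalent: there is exactly one equivalence class. -/
theorem oneWeight_codes_single_class
    (Fq Fqm : Type*) [Field Fq] [Field Fqm] [Fintype Fq] [Fintype Fqm] [Algebra Fq Fqm]
    (m k : ℕ) (hm : 1 ≤ m) (hk : 2 ≤ k) (hrank : finrank Fq Fqm = m)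
    (α β : Fqm) (hα : Algebra.adjoin Fq ({α} : Set Fqm) = ⊤)
    (hβ : Algebra.adjoin Fq ({β} : Set Fqm) = ⊤) :
    (∃ A : Matrix (Fin m × Fin k) (Fin m × Fin k) Fq, IsUnit A ∧
        oneWeightGen Fq Fqm m k α * A.map (algebraMap Fq Fqm) = oneWeightGen Fq Fqm m k β)
    ∧
    (∀ C₁ C₂ : Submodule Fqm ((Fin m × Fin k) → Fqm),
      finrank Fqm C₁ = k → finrank Fqm C₂ = k →
      (∀ v ∈ C₁, v ≠ 0 → finrank Fq (Submodule.span Fq (Set.range v)) = m) →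
      (∀ v ∈ C₂, v ≠ 0 → finrank Fq (Submodule.span Fq (Set.range v)) = m) →
      ∃ A : Matrix (Fin m × Fin k) (Fin m × Fin k) Fq, IsUnit A ∧
        (C₁ : Set ((Fin m × Fin k) → Fqm)) =
          (fun v => Matrix.vecMul v (A.map (algebraMap Fq Fqm))) '' (C₂ : Set _)) :=
  oneWeight_codes_single_class_general Fq Fqm m k hm hrank α β hα hβ
end

section
/- Let k ≥ 2 and C = ⟨x_1, ..., x_k⟩_{F_{q^m}} ⊆ L_{m,q}[x_1,...,x_k]. The linear automorphism group of C consists exactly of the tuples (f_1,...,f_k) with f_i = Σ_j a_{i,j} x_j, a_{i,j} in F_{q^m}, and (a_{i,j}) invertible. In particular |Autlin(C)| = |GL_k(q^m)| = (q^{mk} - 1)(q^{mk} - q^m) ··· (q^{mk} - q^{m(k-1)}). -/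
open Module

set_option linter.unusedSectionVars false

section Aux
variable {Fq Fqm : Type*} [Field Fq] [Field Fqm] [Fintype Fq] [Fintype Fqm] [Algebra Fq Fqm]
  {k : ℕ}

theorem memC_iff (g : (Fin k → Fqm) →ₗ[Fq] Fqm) :
    g ∈ Submodule.span Fqm
        {g : (Fin k → Fqm) →ₗ[Fq] Fqm | ∃ i : Fin k,
          g = (LinearMap.proj i : (Fin k → Fqm) →ₗ[Fqm] Fqm).restrictScalars Fq} ↔
      ∃ c : Fin k → Fqm, ∀ x, g x = ∑ j, c j * x j := by
  have hset : {g : (Fin k → Fqm) →ₗ[Fq] Fqm | ∃ i : Fin k,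
      g = (LinearMap.proj i : (Fin k → Fqm) →ₗ[Fqm] Fqm).restrictScalars Fq} =
      Set.range (fun i : Fin k =>
        (LinearMap.proj i : (Fin k → Fqm) →ₗ[Fqm] Fqm).restrictScalars Fq) := by
    ext g; simp [eq_comm]
  rw [hset, Finsupp.mem_span_range_iff_exists_finsupp]
  constructor
  · rintro ⟨c, hc⟩
    refine ⟨c, fun x => ?_⟩
    rw [← hc]
    simp [Finsupp.sum_fintype, mul_comm]
  · rintro ⟨c, hc⟩
    refine ⟨(Finsupp.equivFunOnFinite.symm c), ?_⟩
    ext x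
    simp [Finsupp.sum_fintype, hc, mul_comm]

theorem comp_coeffs (a : Matrix (Fin k) (Fin k) Fqm) (c : Fin k → Fqm) (x : Fin k → Fqm) :
    ∑ i, c i * a.mulVec x i = ∑ j, (Matrix.vecMul c a) j * x j := by
  simp only [Matrix.mulVec, Matrix.vecMul, dotProduct, Finset.mul_sum, Finset.sum_mul]
  rw [Finset.sum_comm]
  exact Finset.sum_congr rfl fun j _ => Finset.sum_congr rfl fun i _ => by ring

theorem key (C : Submodule Fqm ((Fin k → Fqm) →ₗ[Fq] Fqm))
    (hC : ∀ g, g ∈ C ↔ ∃ c : Fin k → Fqm, ∀ x, g x = ∑ j, c j * x j) :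
    {f : (Fin k → Fqm) →ₗ[Fq] (Fin k → Fqm) | Function.Bijective f ∧
        (fun g => g ∘ₗ f) '' (C : Set ((Fin k → Fqm) →ₗ[Fq] Fqm)) = C} =
      {f | ∃ a : Matrix (Fin k) (Fin k) Fqm, IsUnit a ∧ ∀ x, f x = a.mulVec x} := by
  have hprojC : ∀ i : Fin k,
      ((LinearMap.proj i : (Fin k → Fqm) →ₗ[Fqm] Fqm).restrictScalars Fq) ∈ C := by
    intro i
    rw [hC]
    exact ⟨Pi.single i 1, fun x => by simp [Pi.single_apply, eq_comm]⟩
  ext f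
  constructor
  · rintro ⟨hbij, himg⟩
    have hcoef : ∀ i : Fin k, ∃ c : Fin k → Fqm, ∀ x, f x i = ∑ j, c j * x j := by
      intro i
      have h2 : ((LinearMap.proj i : (Fin k → Fqm) →ₗ[Fqm] Fqm).restrictScalars Fq) ∘ₗ f
          ∈ (C : Set ((Fin k → Fqm) →ₗ[Fq] Fqm)) := by
        rw [← himg]
        exact ⟨_, hprojC i, rfl⟩
      obtain ⟨c, hc⟩ := (hC _).1 h2
      exact ⟨c, fun x => hc x⟩
    choose c hc using hcoef
    have hfa : ∀ x, f x = (Matrix.of c).mulVec x := fun x => funext fun i => by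
      simpa [Matrix.mulVec, dotProduct] using hc i x
    refine ⟨Matrix.of c, ?_, hfa⟩
    rw [← Matrix.mulVec_injective_iff_isUnit]
    intro x y hxy
    exact hbij.1 (by rw [hfa, hfa, hxy])
  · rintro ⟨a, ha, hfa⟩
    have hsub : ∀ (b : Matrix (Fin k) (Fin k) Fqm)
        (h : ∀ g ∈ C, g ∘ₗ f ∈ C), True := fun _ _ => trivial
    -- membership helper: for any g ∈ C, g ∘ f ∈ C
    have hcomp : ∀ g ∈ C, g ∘ₗ f ∈ C := by
      intro g hg
      obtain ⟨c, hcg⟩ := (hC g).1 hg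
      refine (hC _).2 ⟨Matrix.vecMul c a, fun x => ?_⟩
      simp only [LinearMap.comp_apply, hcg, hfa]
      exact comp_coeffs a c x
    have hbij : Function.Bijective f := by
      have hinj := Matrix.mulVec_injective_iff_isUnit.2 ha
      have hsurj := Matrix.mulVec_surjective_iff_isUnit.2 ha
      constructor
      · intro x y hxy
        apply hinj
        rw [← hfa, ← hfa, hxy]
      · intro y
        obtain ⟨x, hx⟩ := hsurj y
        exact ⟨x, by rw [hfa, hx]⟩
    refine ⟨hbij, ?_⟩
    apply Set.Subset.antisymm
    · rintro _ ⟨g, hg, rfl⟩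
      exact hcomp g hg
    · intro g hg
      obtain ⟨c, hcg⟩ := (hC g).1 hg
      set c' := Matrix.vecMul c a⁻¹ with hc'
      have hainv : Matrix.vecMul c' a = c := by
        rw [hc', Matrix.vecMul_vecMul,
          Matrix.nonsing_inv_mul a ((Matrix.isUnit_iff_isUnit_det a).1 ha),
          Matrix.vecMul_one]
      set g' : (Fin k → Fqm) →ₗ[Fq] Fqm := ∑ j, c' j •
        ((LinearMap.proj j : (Fin k → Fqm) →ₗ[Fqm] Fqm).restrictScalars Fq) with hg'
      have hg'app : ∀ x, g' x = ∑ j, c' j * x j := by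
        intro x
        rw [hg']
        simp [LinearMap.sum_apply]
      have hg'C : g' ∈ C := by
        rw [hg']
        exact Submodule.sum_mem _ fun j _ => Submodule.smul_mem _ _ (hprojC j)
      refine ⟨g', hg'C, ?_⟩
      refine LinearMap.ext fun x => ?_
      simp only [LinearMap.comp_apply, hg'app, hfa, hcg]
      rw [comp_coeffs a c' x, hainv]

theorem card_matrix_set :
    Set.ncard {f : (Fin k → Fqm) →ₗ[Fq] (Fin k → Fqm) |
        ∃ a : Matrix (Fin k) (Fin k) Fqm, IsUnit a ∧ ∀ x, f x = a.mulVec x} =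
      ∏ i ∈ Finset.range k, (Fintype.card Fqm ^ k - Fintype.card Fqm ^ i) := by
  set φ : GL (Fin k) Fqm → ((Fin k → Fqm) →ₗ[Fq] (Fin k → Fqm)) :=
    fun a => ((Matrix.mulVecLin (a : Matrix (Fin k) (Fin k) Fqm)).restrictScalars Fq) with hφ
  have hrange : {f : (Fin k → Fqm) →ₗ[Fq] (Fin k → Fqm) |
      ∃ a : Matrix (Fin k) (Fin k) Fqm, IsUnit a ∧ ∀ x, f x = a.mulVec x} = Set.range φ := by
    ext f
    constructor
    · rintro ⟨a, ha, h⟩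
      refine ⟨ha.unit, LinearMap.ext fun x => ?_⟩
      simp [hφ, h]
    · rintro ⟨a, rfl⟩
      exact ⟨a, a.isUnit, fun x => rfl⟩
  have hinj : Function.Injective φ := by
    intro a b hab
    refine Units.ext (Matrix.ext fun i j => ?_)
    have := congrFun (congrArg (fun g => g.toFun) hab) (Pi.single j 1)
    have h2 := congrFun this i
    simpa [hφ] using h2
  rw [hrange, ← Nat.card_coe_set_eq, Nat.card_range_of_injective hinj,
    Matrix.card_GL_field, ← Fin.prod_univ_eq_prod_range]


end Aux


/-- Let `k ≥ 2` and let `C = ⟨x_1, …, x_k⟩_{F_{q^m}}` inside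
`L_{m,q}[x_1,…,x_k]`, the space of `F_q`-linear maps `(F_{q^m})^k → F_{q^m}` (the `x_i` being
the coordinate projections). The linear automorphism group of `C` — the invertible
`F_q`-linear maps `f : (F_{q^m})^k → (F_{q^m})^k` with `C ∘ f = C` — consists exactly of the
`F_{q^m}`-linear maps `x ↦ a ⬝ x` with `a ∈ GL_k(F_{q^m})`; in particular its cardinality is
`|GL_k(q^m)| = (q^{mk} - 1)(q^{mk} - q^m) ⋯ (q^{mk} - q^{m(k-1)})`. -/
theorem autlin_span_of_projections
    (Fq Fqm : Type*) [Field Fq] [Field Fqm] [Fintype Fq] [Fintype Fqm] [Algebra Fq Fqm]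
    (m k : ℕ) (hm : 1 ≤ m) (hk : 2 ≤ k) (hrank : finrank Fq Fqm = m) :
    letI C : Submodule Fqm ((Fin k → Fqm) →ₗ[Fq] Fqm) :=
      Submodule.span Fqm
        {g | ∃ i : Fin k, g = (LinearMap.proj i : (Fin k → Fqm) →ₗ[Fqm] Fqm).restrictScalars Fq}
    letI Autlin : Set ((Fin k → Fqm) →ₗ[Fq] (Fin k → Fqm)) :=
      {f | Function.Bijective f ∧
        (fun g => g ∘ₗ f) '' (C : Set ((Fin k → Fqm) →ₗ[Fq] Fqm)) = C}
    Autlin = {f | ∃ a : Matrix (Fin k) (Fin k) Fqm, IsUnit a ∧ ∀ x, f x = a.mulVec x} ∧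
    Autlin.ncard =
      ∏ i ∈ Finset.range k, (Fintype.card Fq ^ (m * k) - Fintype.card Fq ^ (m * i)) := by
  have heq := key (Fq := Fq) (Fqm := Fqm) (k := k)
    (Submodule.span Fqm
      {g | ∃ i : Fin k, g = (LinearMap.proj i : (Fin k → Fqm) →ₗ[Fqm] Fqm).restrictScalars Fq})
    (fun g => memC_iff g)
  refine ⟨heq, ?_⟩
  rw [heq, card_matrix_set]
  have hcard : Fintype.card Fqm = Fintype.card Fq ^ m := by
    rw [← hrank]
    exact card_eq_pow_finrank (K := Fq) (V := Fqm)
  refine Finset.prod_congr rfl fun i _ => ?_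
  rw [hcard, ← pow_mul, ← pow_mul]
end

section
/- The number of one-weight [mk, k, m] rank-metric codes over F_{q^m} in (F_{q^m})^{mk} equals |GL_{mk}(q)| / [(q^{mk} - 1)(q^{mk} - q^m) ··· (q^{mk} - q^{m(k-1)})], for k ≥ 2. -/
open Module


set_option linter.unusedSectionVars false
set_option maxHeartbeats 1000000

open Module Matrix

namespace OneWeightAux

variable {K : Type*} [Field K] {k N : ℕ}

/-- dot product as a linear map in the left argument. -/
noncomputable def dotl (w : Fin k → K) : (Fin k → K) →ₗ[K] K where
  toFun x := x ⬝ᵥ w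
  map_add' a b := add_dotProduct a b w
  map_smul' c a := smul_dotProduct c a w

@[simp] lemma dotl_apply (w x : Fin k → K) : dotl w x = x ⬝ᵥ w := rfl

/-- dot product as a linear map in the right argument. -/
noncomputable def dotr (x : Fin k → K) : (Fin k → K) →ₗ[K] K where
  toFun y := x ⬝ᵥ y
  map_add' a b := dotProduct_add x a b
  map_smul' c a := dotProduct_smul c x a

@[simp] lemma dotr_apply (w x : Fin k → K) : dotr x w = x ⬝ᵥ w := rfl

/-- "generator matrix" map of a family of columns. -/
noncomputable def Mb (b : Fin N → (Fin k → K)) : (Fin k → K) →ₗ[K] (Fin N → K) :=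
  LinearMap.pi (fun i => dotl (b i))

@[simp] lemma Mb_apply (b : Fin N → (Fin k → K)) (x : Fin k → K) (i : Fin N) :
    Mb b x i = x ⬝ᵥ b i := rfl

lemma dot_faithful {w w' : Fin k → K} (h : ∀ x, x ⬝ᵥ w = x ⬝ᵥ w') : w = w' := by
  funext j
  have := h (Pi.single j 1)
  simpa [single_dotProduct] using this

/-- transpose of an endomorphism w.r.t. the dot product pairing. -/
noncomputable def Tp (f : (Fin k → K) →ₗ[K] (Fin k → K)) :
    (Fin k → K) →ₗ[K] (Fin k → K) :=
  Matrix.toLin' (LinearMap.toMatrix' f)ᵀ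

lemma dot_Tp (f : (Fin k → K) →ₗ[K] (Fin k → K)) (x y : Fin k → K) :
    x ⬝ᵥ Tp f y = f x ⬝ᵥ y := by
  rw [Tp, Matrix.toLin'_apply, Matrix.dotProduct_mulVec, Matrix.vecMul_transpose,
    ← Matrix.toLin'_apply, Matrix.toLin'_toMatrix']

lemma Tp_dot (f : (Fin k → K) →ₗ[K] (Fin k → K)) (x y : Fin k → K) :
    Tp f x ⬝ᵥ y = x ⬝ᵥ f y := by
  rw [dotProduct_comm, dot_Tp, dotProduct_comm]

lemma Tp_inj (f : (Fin k → K) →ₗ[K] (Fin k → K)) (hf : Function.Surjective f) :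
    Function.Injective (Tp f) := by
  rw [injective_iff_map_eq_zero]
  intro y hy
  by_contra hne
  have : ∀ z, z ⬝ᵥ y = (0 : K) := by
    intro z
    obtain ⟨x, rfl⟩ := hf z
    rw [← dot_Tp, hy, dotProduct_zero]
  exact hne (dot_faithful (w' := 0) (by simpa using this))

lemma Tp_bij (f : (Fin k → K) →ₗ[K] (Fin k → K)) (hf : Function.Bijective f) :
    Function.Bijective (Tp f) :=
  ⟨Tp_inj f hf.2, LinearMap.injective_iff_surjective.mp (Tp_inj f hf.2)⟩

section TwoFields

variable {Fq Fqm : Type*} [Field Fq] [Field Fqm] [Fintype Fq] [Fintype Fqm]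
  [Algebra Fq Fqm] {m k N : ℕ}

lemma findim_base : Module.Finite Fq Fqm :=
  (Module.finite_iff_finite (R := Fq) (M := Fqm)).mpr inferInstance

/-- dot with `x` on the left, as an `Fq`-linear map. -/
noncomputable def phi (x : Fin k → Fqm) : (Fin k → Fqm) →ₗ[Fq] Fqm :=
  (dotr x).restrictScalars Fq

@[simp] lemma phi_apply (x y : Fin k → Fqm) : phi (Fq := Fq) x y = x ⬝ᵥ y := rfl

lemma phi_surj {x : Fin k → Fqm} (hx : x ≠ 0) :
    Function.Surjective (phi (Fq := Fq) x) := by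
  obtain ⟨j, hj⟩ := Function.ne_iff.mp hx
  simp only [Pi.zero_apply] at hj
  intro c
  refine ⟨Pi.single j ((x j)⁻¹ * c), ?_⟩
  simp only [phi_apply, dotProduct_single]
  rw [mul_inv_cancel_left₀ hj]

lemma span_range_Mb (c : Fin N → (Fin k → Fqm)) (x : Fin k → Fqm) :
    Submodule.span Fq (Set.range (Mb c x)) =
      (Submodule.span Fq (Set.range c)).map (phi x) := by
  rw [Submodule.map_span, ← Set.range_comp]
  rfl

lemma Mb_inj_of_span (c : Fin N → (Fin k → Fqm))
    (hc : Submodule.span Fq (Set.range c) = ⊤) :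
    Function.Injective (Mb c) := by
  rw [injective_iff_map_eq_zero]
  intro x hx
  have hker : Submodule.span Fq (Set.range c) ≤ LinearMap.ker (phi x) := by
    rw [Submodule.span_le]
    rintro _ ⟨i, rfl⟩
    have : Mb c x i = 0 := by rw [hx]; rfl
    simpa [LinearMap.mem_ker] using this
  rw [hc, top_le_iff] at hker
  have hz : ∀ y, x ⬝ᵥ y = (0 : Fqm) := by
    intro y
    have : y ∈ LinearMap.ker (phi x) := hker ▸ Submodule.mem_top
    simpa [LinearMap.mem_ker] using this
  funext j
  have := hz (Pi.single j 1)
  simpa [dotProduct_single] using this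

end TwoFields

section TwoFields2

variable {Fq Fqm : Type*} [Field Fq] [Field Fqm] [Fintype Fq] [Fintype Fqm]
  [Algebra Fq Fqm] {m k N : ℕ}

lemma phi_range_top {x : Fin k → Fqm} (hx : x ≠ 0) :
    LinearMap.range (phi (Fq := Fq) x) = ⊤ :=
  LinearMap.range_eq_top.mpr (phi_surj hx)

lemma finrank_code_of_basis (b : Basis (Fin N) Fq (Fin k → Fqm)) :
    finrank Fqm (LinearMap.range (Mb ⇑b)) = k := by
  rw [LinearMap.finrank_range_of_inj (Mb_inj_of_span ⇑b b.span_eq)]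
  simp [Module.finrank_fintype_fun_eq_card]

lemma oneweight_of_basis (hrank : finrank Fq Fqm = m)
    (b : Basis (Fin N) Fq (Fin k → Fqm)) :
    ∀ v ∈ LinearMap.range (Mb ⇑b), v ≠ 0 →
      finrank Fq (Submodule.span Fq (Set.range v)) = m := by
  haveI := findim_base (Fq := Fq) (Fqm := Fqm)
  rintro _ ⟨x, rfl⟩ hv
  have hx : x ≠ 0 := by rintro rfl; exact hv (map_zero _)
  rw [span_range_Mb, b.span_eq, Submodule.map_top, phi_range_top hx, finrank_top]
  exact hrank

/-- pairing map into the dual, built from a nonzero functional `t`. -/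
noncomputable def theta (t : Fqm →ₗ[Fq] Fq) :
    (Fin k → Fqm) →ₗ[Fq] Module.Dual Fq (Fin k → Fqm) where
  toFun a := t ∘ₗ phi a
  map_add' a a' := by
    ext y
    simp [phi, dotr, add_dotProduct]
  map_smul' c a := by
    ext y
    simp [phi, dotr, smul_dotProduct]

@[simp] lemma theta_apply (t : Fqm →ₗ[Fq] Fq) (a y : Fin k → Fqm) :
    theta t a y = t (a ⬝ᵥ y) := rfl

lemma theta_inj {t : Fqm →ₗ[Fq] Fq} (ht : t ≠ 0) :
    Function.Injective (theta (k := k) t) := by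
  rw [injective_iff_map_eq_zero]
  intro a ha
  by_contra hne
  obtain ⟨j, hj⟩ := Function.ne_iff.mp hne
  simp only [Pi.zero_apply] at hj
  apply ht
  ext c
  have := congrFun (congrArg DFunLike.coe ha) (Pi.single j ((a j)⁻¹ * c))
  simpa [dotProduct_single, mul_inv_cancel_left₀ hj] using this

lemma theta_surj {t : Fqm →ₗ[Fq] Fq} (ht : t ≠ 0) :
    Function.Surjective (theta (k := k) t) := by
  haveI := findim_base (Fq := Fq) (Fqm := Fqm)
  exact (LinearMap.injective_iff_surjective_of_finrank_eq_finrank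
    (Subspace.dual_finrank_eq).symm).mp (theta_inj ht)

end TwoFields2

section Main

variable {Fq Fqm : Type*} [Field Fq] [Field Fqm] [Fintype Fq] [Fintype Fqm]
  [Algebra Fq Fqm] {m k N : ℕ}

lemma exists_basis (hrank : finrank Fq Fqm = m) (hN : finrank Fq (Fin k → Fqm) = N)
    (C : Submodule Fqm (Fin N → Fqm)) (hC1 : finrank Fqm C = k)
    (hC2 : ∀ v ∈ C, v ≠ 0 → finrank Fq (Submodule.span Fq (Set.range v)) = m) :
    ∃ b : Basis (Fin N) Fq (Fin k → Fqm), LinearMap.range (Mb ⇑b) = C := by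
  haveI := findim_base (Fq := Fq) (Fqm := Fqm)
  let c := Module.finBasisOfFinrankEq Fqm C hC1
  set b : Fin N → (Fin k → Fqm) := fun i j => (c j : Fin N → Fqm) i with hb
  have hMb : ∀ x, Mb b x = ((c.equivFun.symm x : C) : Fin N → Fqm) := by
    intro x; funext i
    rw [Basis.equivFun_symm_apply, AddSubmonoidClass.coe_finset_sum]
    simp [Mb_apply, dotProduct, hb]
  have hrange : LinearMap.range (Mb b) = C := by
    apply le_antisymm
    · rintro _ ⟨x, rfl⟩
      rw [hMb]; exact (c.equivFun.symm x).2
    · intro v hv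
      exact ⟨c.equivFun ⟨v, hv⟩, by rw [hMb, LinearEquiv.symm_apply_apply]⟩
  have hinj : Function.Injective (Mb b) := by
    rw [injective_iff_map_eq_zero]
    intro x hx
    have h2 : ((c.equivFun.symm x : C) : Fin N → Fqm) = 0 := (hMb x).symm.trans hx
    have h3 : c.equivFun.symm x = 0 := Subtype.ext h2
    exact c.equivFun.symm.injective (by simp [h3])
  have hspan : Submodule.span Fq (Set.range b) = ⊤ := by
    by_contra hW
    obtain ⟨f, hf0, hfW⟩ := Submodule.exists_dual_map_eq_bot_of_lt_top
      (p := Submodule.span Fq (Set.range b)) (lt_top_iff_ne_top.mpr hW) inferInstance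
    have hnt : Nontrivial (Module.Dual Fq Fqm) := by
      apply Module.nontrivial_of_finrank_pos (R := Fq)
      rw [Subspace.dual_finrank_eq]
      exact finrank_pos
    obtain ⟨t, ht⟩ := exists_ne (0 : Module.Dual Fq Fqm)
    obtain ⟨a, rfl⟩ := theta_surj ht f
    have ha : a ≠ 0 := by rintro rfl; exact hf0 (map_zero _)
    have hva : Mb b a ≠ 0 := fun h => ha (hinj (by rw [h, map_zero]))
    have hmem : Mb b a ∈ C := hrange ▸ ⟨a, rfl⟩
    have htop : (Submodule.span Fq (Set.range b)).map (phi a) = ⊤ := by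
      apply Submodule.eq_top_of_finrank_eq
      rw [← span_range_Mb, hC2 _ hmem hva, hrank]
    apply ht
    ext z
    have hz : z ∈ (Submodule.span Fq (Set.range b)).map (phi a) :=
      htop ▸ Submodule.mem_top
    obtain ⟨w, hw, rfl⟩ := hz
    have h0 : theta t a w = 0 := by
      have : theta t a w ∈ (Submodule.span Fq (Set.range b)).map (theta t a) :=
        Submodule.mem_map_of_mem hw
      rw [hfW] at this
      simpa using this
    simpa using h0
  refine ⟨basisOfTopLeSpanOfCardEqFinrank b hspan.ge (by simp [hN]), ?_⟩
  rw [coe_basisOfTopLeSpanOfCardEqFinrank]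
  exact hrange

lemma code_map (b : Fin N → (Fin k → Fqm)) (A : (Fin k → Fqm) ≃ₗ[Fqm] (Fin k → Fqm)) :
    LinearMap.range (Mb (fun i => A (b i))) = LinearMap.range (Mb b) := by
  have hcomp : Mb (fun i => A (b i)) = (Mb b) ∘ₗ (Tp A.toLinearMap) := by
    apply LinearMap.ext; intro x; funext i
    simp only [Mb_apply, LinearMap.comp_apply]
    rw [Tp_dot]
    rfl
  rw [hcomp, LinearMap.range_comp,
    LinearMap.range_eq_top.mpr (Tp_bij A.toLinearMap A.bijective).2,
    Submodule.map_top]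

lemma exists_equiv (b b' : Fin N → (Fin k → Fqm))
    (hb : Function.Injective (Mb b)) (hb' : Function.Injective (Mb b'))
    (h : LinearMap.range (Mb b) = LinearMap.range (Mb b')) :
    ∃ A : (Fin k → Fqm) ≃ₗ[Fqm] (Fin k → Fqm), ∀ i, b' i = A (b i) := by
  let eb := LinearEquiv.ofInjective (Mb b) hb
  let eb' := LinearEquiv.ofInjective (Mb b') hb'
  let u : (Fin k → Fqm) ≃ₗ[Fqm] (Fin k → Fqm) :=
    (eb.trans (LinearEquiv.ofEq _ _ h)).trans eb'.symm
  have hu : ∀ x, Mb b' (u x) = Mb b x := by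
    intro x
    have h1 : eb' (u x) = LinearEquiv.ofEq _ _ h (eb x) := by
      simp only [u, LinearEquiv.trans_apply, LinearEquiv.apply_symm_apply]
    have h2 := congrArg (Subtype.val) h1
    simpa [eb, eb', LinearEquiv.ofInjective_apply, LinearEquiv.coe_ofEq_apply] using h2
  have hT := Tp_bij u.toLinearMap u.bijective
  let e := LinearEquiv.ofBijective (Tp u.toLinearMap) hT
  refine ⟨e.symm, fun i => ?_⟩
  have hTb : Tp u.toLinearMap (b' i) = b i := by
    apply dot_faithful
    intro x
    calc x ⬝ᵥ Tp u.toLinearMap (b' i) = u x ⬝ᵥ b' i := dot_Tp _ _ _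
      _ = Mb b' (u x) i := rfl
      _ = Mb b x i := by rw [hu]
      _ = x ⬝ᵥ b i := rfl
  rw [eq_comm, LinearEquiv.symm_apply_eq, LinearEquiv.ofBijective_apply, hTb]

lemma card_linEquiv (K : Type*) [Field K] (N : ℕ) :
    Nat.card ((Fin N → K) ≃ₗ[K] (Fin N → K)) = Nat.card (GL (Fin N) K) :=
  Nat.card_congr ((Matrix.GeneralLinearGroup.toLin.trans
    (LinearMap.GeneralLinearGroup.generalLinearEquiv K (Fin N → K))).toEquiv.symm)

lemma card_basis {K V : Type*} [Field K] [AddCommGroup V] [Module K V]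
    [FiniteDimensional K V] {N : ℕ} (h : finrank K V = N) :
    Nat.card (Basis (Fin N) K V) = Nat.card (GL (Fin N) K) := by
  have hNfin : finrank K (Fin N → K) = N := by
    simp [Module.finrank_fintype_fun_eq_card]
  let e0 : V ≃ₗ[K] (Fin N → K) := LinearEquiv.ofFinrankEq _ _ (by rw [h, hNfin])
  let e1 : Basis (Fin N) K V ≃ (V ≃ₗ[K] (Fin N → K)) :=
    ⟨fun b => b.equivFun, fun e => Module.Basis.ofEquivFun e,
     fun b => Basis.ofEquivFun_equivFun b, fun e => Basis.equivFun_ofEquivFun e⟩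
  let e2 : (V ≃ₗ[K] (Fin N → K)) ≃ ((Fin N → K) ≃ₗ[K] (Fin N → K)) :=
    ⟨fun e => e0.symm.trans e, fun u => e0.trans u,
     fun e => by ext x; simp, fun u => by ext x; simp⟩
  rw [Nat.card_congr (e1.trans e2), card_linEquiv]

end Main

end OneWeightAux

/-- For `k ≥ 2`, the number of one-weight `[mk, k, m]` rank-metric codes
over `F_{q^m}` in `F_{q^m}^{mk}` — i.e. `k`-dimensional `F_{q^m}`-subspaces all of whose
nonzero codewords have rank weight exactly `m` — equals
`|GL_{mk}(q)| / ((q^{mk}-1)(q^{mk}-q^m)⋯(q^{mk}-q^{m(k-1)}))`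
(stated in product form to avoid division). -/
theorem card_oneWeight_codes
    (Fq Fqm : Type*) [Field Fq] [Field Fqm] [Fintype Fq] [Fintype Fqm] [Algebra Fq Fqm]
    (q m k : ℕ) (hm : 1 ≤ m) (hk : 2 ≤ k)
    (hq : Fintype.card Fq = q) (hrank : finrank Fq Fqm = m) :
    Set.ncard {C : Submodule Fqm (Fin (m * k) → Fqm) |
        finrank Fqm C = k ∧
        ∀ v ∈ C, v ≠ 0 → finrank Fq (Submodule.span Fq (Set.range v)) = m}
      * ∏ i ∈ Finset.range k, (q ^ (m * k) - q ^ (m * i))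
      = ∏ i ∈ Finset.range (m * k), (q ^ (m * k) - q ^ i) := by
  classical
  haveI := OneWeightAux.findim_base (Fq := Fq) (Fqm := Fqm)
  set S := {C : Submodule Fqm (Fin (m * k) → Fqm) |
      finrank Fqm C = k ∧
      ∀ v ∈ C, v ≠ 0 → finrank Fq (Submodule.span Fq (Set.range v)) = m} with hS
  have hNE : finrank Fq (Fin k → Fqm) = m * k := by
    rw [Module.finrank_pi_fintype]
    simp [hrank, Finset.sum_const, mul_comm]
  -- the code attached to a basis
  set F : Basis (Fin (m * k)) Fq (Fin k → Fqm) → Submodule Fqm (Fin (m * k) → Fqm) :=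
    fun b => LinearMap.range (OneWeightAux.Mb ⇑b) with hF
  have hmemF : ∀ b, F b ∈ S := fun b =>
    ⟨OneWeightAux.finrank_code_of_basis b, OneWeightAux.oneweight_of_basis hrank b⟩
  have hsec0 : ∀ C : S, ∃ b, F b = (C : Submodule Fqm (Fin (m * k) → Fqm)) := by
    rintro ⟨C, hC1, hC2⟩
    exact OneWeightAux.exists_basis hrank hNE C hC1 hC2
  choose sec hsec using hsec0
  have hmap_coe : ∀ (b : Basis (Fin (m * k)) Fq (Fin k → Fqm))
      (A : (Fin k → Fqm) ≃ₗ[Fqm] (Fin k → Fqm)),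
      ⇑(b.map (A.restrictScalars Fq)) = fun i => A (b i) := by
    intro b A; funext i; simp [Basis.map_apply]
  have hFmap : ∀ (b : Basis (Fin (m * k)) Fq (Fin k → Fqm))
      (A : (Fin k → Fqm) ≃ₗ[Fqm] (Fin k → Fqm)),
      F (b.map (A.restrictScalars Fq)) = F b := by
    intro b A
    rw [hF]
    simp only
    rw [hmap_coe]
    exact OneWeightAux.code_map ⇑b A
  set Φ : S × ((Fin k → Fqm) ≃ₗ[Fqm] (Fin k → Fqm)) →
      Basis (Fin (m * k)) Fq (Fin k → Fqm) :=
    fun p => (sec p.1).map (p.2.restrictScalars Fq) with hΦ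
  have hΦbij : Function.Bijective Φ := by
    constructor
    · rintro ⟨C, A⟩ ⟨C', A'⟩ hEq
      have hCC' : C = C' := by
        have h1 : F (Φ (C, A)) = (C : Submodule Fqm (Fin (m * k) → Fqm)) := by
          rw [hΦ]; simp only; rw [hFmap, hsec]
        have h2 : F (Φ (C', A')) = (C' : Submodule Fqm (Fin (m * k) → Fqm)) := by
          rw [hΦ]; simp only; rw [hFmap, hsec]
        exact Subtype.ext (by rw [← h1, ← h2, hEq])
      subst hCC'
      have hco := congrArg DFunLike.coe hEq
      rw [hΦ] at hco
      simp only at hco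
      rw [hmap_coe, hmap_coe] at hco
      have hAA' : A = A' := by
        have hext : ((A.restrictScalars Fq : (Fin k → Fqm) ≃ₗ[Fq] (Fin k → Fqm)) :
            (Fin k → Fqm) →ₗ[Fq] (Fin k → Fqm))
            = ((A'.restrictScalars Fq : (Fin k → Fqm) ≃ₗ[Fq] (Fin k → Fqm)) :
            (Fin k → Fqm) →ₗ[Fq] (Fin k → Fqm)) := by
          apply LinearMap.ext_on (sec C).span_eq
          rintro _ ⟨i, rfl⟩
          simpa using congrFun hco i
        exact LinearEquiv.ext fun y => LinearMap.congr_fun hext y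
      rw [hAA']
    · intro b
      have hinj_b : Function.Injective (OneWeightAux.Mb ⇑b) :=
        OneWeightAux.Mb_inj_of_span _ b.span_eq
      set C : S := ⟨F b, hmemF b⟩ with hC
      have hinj_s : Function.Injective (OneWeightAux.Mb ⇑(sec C)) :=
        OneWeightAux.Mb_inj_of_span _ (sec C).span_eq
      have hre : LinearMap.range (OneWeightAux.Mb ⇑(sec C))
          = LinearMap.range (OneWeightAux.Mb ⇑b) := hsec C
      obtain ⟨A, hA⟩ := OneWeightAux.exists_equiv _ _ hinj_s hinj_b hre
      refine ⟨⟨C, A⟩, ?_⟩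
      apply DFunLike.coe_injective
      rw [hΦ]; simp only
      rw [hmap_coe]
      funext i
      exact (hA i).symm
  -- cardinalities
  have hcard1 : Nat.card (Basis (Fin (m * k)) Fq (Fin k → Fqm))
      = ∏ i ∈ Finset.range (m * k), (q ^ (m * k) - q ^ i) := by
    rw [OneWeightAux.card_basis hNE, Matrix.card_GL_field, hq]
    exact Fin.prod_univ_eq_prod_range (fun j => q ^ (m * k) - q ^ j) (m * k)
  have hcardFqm : Fintype.card Fqm = q ^ m := by
    rw [card_eq_pow_finrank (K := Fq) (V := Fqm), hq, hrank]
  have hcard2 : Nat.card ((Fin k → Fqm) ≃ₗ[Fqm] (Fin k → Fqm))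
      = ∏ i ∈ Finset.range k, (q ^ (m * k) - q ^ (m * i)) := by
    rw [OneWeightAux.card_linEquiv, Matrix.card_GL_field, hcardFqm,
      ← Fin.prod_univ_eq_prod_range (fun i => q ^ (m * k) - q ^ (m * i)) k]
    refine Finset.prod_congr rfl fun i _ => ?_
    rw [← pow_mul, ← pow_mul]
  have hmain : (∏ i ∈ Finset.range (m * k), (q ^ (m * k) - q ^ i))
      = Set.ncard S * ∏ i ∈ Finset.range k, (q ^ (m * k) - q ^ (m * i)) := by
    rw [← hcard1, ← Nat.card_congr (Equiv.ofBijective Φ hΦbij), Nat.card_prod,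
      hcard2, Nat.card_coe_set_eq]
  rw [hmain]
end

section
/- The density of k-dimensional MRD codes in (F_{q^m})^{mk} satisfies lim_{q→∞} δ^{rk}_m(m, mk, k; q) = 1, where δ^{rk}_m(m, mk, k; q) = |GL_{mk}(q)| / [(q^{mk}-1)(q^{mk}-q^m)···(q^{mk}-q^{m(k-1)}) · [mk choose k]_{q^m}]. -/
open Filter Finset

private lemma aux_ratio (a b : ℕ) (h : a < b) :
    Filter.Tendsto (fun q : ℕ => ((q : ℝ) ^ b - (q : ℝ) ^ a) / (q : ℝ) ^ b)
      Filter.atTop (nhds 1) := by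
  have h0 : Tendsto (fun q : ℕ => (q : ℝ) ^ a / (q : ℝ) ^ b) atTop (nhds 0) :=
    (tendsto_pow_div_pow_atTop_zero h).comp tendsto_natCast_atTop_atTop
  have h1 : Tendsto (fun q : ℕ => 1 - (q : ℝ) ^ a / (q : ℝ) ^ b) atTop (nhds 1) := by
    simpa using tendsto_const_nhds.sub h0
  refine h1.congr' ?_
  filter_upwards [eventually_ge_atTop 1] with q hq
  have hx : (0 : ℝ) < (q : ℝ) := by exact_mod_cast Nat.lt_of_lt_of_le Nat.zero_lt_one hq
  have hb : ((q : ℝ)) ^ b ≠ 0 := pow_ne_zero _ hx.ne'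
  rw [sub_div, div_self hb]

private lemma aux_G (a b : ℕ) (ha : 0 < a) (hb : 0 < b) :
    Filter.Tendsto
      (fun q : ℕ => (((q : ℝ) ^ a - 1) / ((q : ℝ) ^ b - 1)) / ((q : ℝ) ^ a / (q : ℝ) ^ b))
      Filter.atTop (nhds 1) := by
  have hA : Tendsto (fun q : ℕ => ((q : ℝ) ^ a - 1) / (q : ℝ) ^ a) atTop (nhds 1) := by
    have := aux_ratio 0 a ha
    simpa using this
  have hB : Tendsto (fun q : ℕ => ((q : ℝ) ^ b - 1) / (q : ℝ) ^ b) atTop (nhds 1) := by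
    have := aux_ratio 0 b hb
    simpa using this
  have h := hA.div hB one_ne_zero
  rw [div_one] at h
  refine h.congr' ?_
  filter_upwards [eventually_ge_atTop 2] with q hq
  have hx : (1 : ℝ) < (q : ℝ) := by exact_mod_cast Nat.lt_of_lt_of_le Nat.one_lt_two hq
  have hx0 : ((q : ℝ)) ≠ 0 := by positivity
  have hpa : ((q : ℝ)) ^ a ≠ 0 := pow_ne_zero _ hx0
  have hpb : ((q : ℝ)) ^ b ≠ 0 := pow_ne_zero _ hx0
  exact (div_div_div_comm _ _ _ _).symm

private lemma prods_tendsto_one {s : Finset ℕ} {f : ℕ → ℕ → ℝ}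
    (h : ∀ i ∈ s, Filter.Tendsto (fun q => f i q) Filter.atTop (nhds 1)) :
    Filter.Tendsto (fun q => ∏ i ∈ s, f i q) Filter.atTop (nhds 1) := by
  have := tendsto_finset_prod s h
  simpa using this

/-- For fixed `m, k ≥ 2`, the density of `k`-dimensional MRD codes in
`F_{q^m}^{mk}`,
`δ^rk_m(m, mk, k; q) = |GL_{mk}(q)| / ((q^{mk}-1)(q^{mk}-q^m)⋯(q^{mk}-q^{m(k-1)}) ⬝ [mk choose k]_{q^m})`,
tends to `1` as `q → ∞`; here `[mk choose k]_{q^m} = ∏_{i<k} (q^{m(mk-i)}-1)/(q^{m(i+1)}-1)`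
is the Gaussian binomial with base `q^m`. -/
theorem density_oneWeight_tendsto_one (m k : ℕ) (hm : 2 ≤ m) (hk : 2 ≤ k) :
    Filter.Tendsto
      (fun q : ℕ =>
        (∏ i ∈ Finset.range (m * k), ((q : ℝ) ^ (m * k) - (q : ℝ) ^ i)) /
          ((∏ i ∈ Finset.range k, ((q : ℝ) ^ (m * k) - (q : ℝ) ^ (m * i))) *
            ∏ i ∈ Finset.range k,
              (((q : ℝ) ^ (m * (m * k - i)) - 1) / ((q : ℝ) ^ (m * (i + 1)) - 1))))
      Filter.atTop (nhds 1) := by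
  set T := m * k with hT
  have hkT : k ≤ T := by
    have := Nat.mul_le_mul_right k hm
    omega
  have h2kT : 2 * k ≤ T := Nat.mul_le_mul_right k hm
  -- key exponent identity
  have key : T * k + (∑ i ∈ range k, m * (T - i)) = (∑ i ∈ range k, m * (i + 1)) + T * T := by
    rw [← Finset.sum_range_reflect (fun i => m * (T - i)) k]
    have hcongr : ∀ i ∈ range k, m * (T - (k - 1 - i)) = m * (T - k) + m * (i + 1) := by
      intro i hi
      rw [← Nat.mul_add]
      congr 1
      have := mem_range.mp hi
      omega
    rw [Finset.sum_congr rfl hcongr, Finset.sum_add_distrib, Finset.sum_const, card_range,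
      smul_eq_mul]
    have hu : (T - k) + k = T := by omega
    set u := T - k
    have hTz : (T : ℤ) = (m : ℤ) * (k : ℤ) := by exact_mod_cast hT
    have huz : (u : ℤ) + (k : ℤ) = (T : ℤ) := by exact_mod_cast hu
    zify
    linear_combination (T : ℤ) * huz - (u : ℤ) * hTz
  -- real version of the exponent identity
  have keyR : ∀ q : ℕ, 1 ≤ q →
      ((q : ℝ) ^ T) ^ k * ∏ i ∈ range k, ((q : ℝ) ^ (m * (T - i)) / (q : ℝ) ^ (m * (i + 1)))
        = (q : ℝ) ^ (T * T) := by
    intro q hq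
    have hx0 : ((q : ℝ)) ≠ 0 := by
      have : (0 : ℝ) < (q : ℝ) := by exact_mod_cast Nat.lt_of_lt_of_le Nat.zero_lt_one hq
      exact this.ne'
    rw [prod_div_distrib, Finset.prod_pow_eq_pow_sum, Finset.prod_pow_eq_pow_sum, ← pow_mul,
      ← mul_div_assoc, ← pow_add, key, pow_add]
    rw [mul_div_cancel_left₀ _ (pow_ne_zero _ hx0)]
  -- numerator
  have hN : Tendsto (fun q : ℕ =>
      (∏ i ∈ range T, ((q : ℝ) ^ T - (q : ℝ) ^ i)) / (q : ℝ) ^ (T * T)) atTop (nhds 1) := by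
    have h := prods_tendsto_one (s := range T)
      (f := fun i q => ((q : ℝ) ^ T - (q : ℝ) ^ i) / (q : ℝ) ^ T)
      (fun i hi => aux_ratio i T (mem_range.mp hi))
    refine h.congr fun q => ?_
    rw [prod_div_distrib, prod_const, card_range, ← pow_mul]
  -- denominator
  have hD : Tendsto (fun q : ℕ =>
      ((∏ i ∈ range k, ((q : ℝ) ^ T - (q : ℝ) ^ (m * i))) *
        ∏ i ∈ range k, (((q : ℝ) ^ (m * (T - i)) - 1) / ((q : ℝ) ^ (m * (i + 1)) - 1))) /
        (q : ℝ) ^ (T * T)) atTop (nhds 1) := by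
    have h1 : Tendsto (fun q : ℕ =>
        ∏ i ∈ range k, (((q : ℝ) ^ T - (q : ℝ) ^ (m * i)) / (q : ℝ) ^ T)) atTop (nhds 1) := by
      refine prods_tendsto_one fun i hi => aux_ratio (m * i) T ?_
      have := mem_range.mp hi
      calc m * i < m * k := by
            exact (mul_lt_mul_iff_right₀ (by omega)).mpr this
        _ = T := hT.symm
    have h2 : Tendsto (fun q : ℕ =>
        ∏ i ∈ range k, ((((q : ℝ) ^ (m * (T - i)) - 1) / ((q : ℝ) ^ (m * (i + 1)) - 1)) /
          ((q : ℝ) ^ (m * (T - i)) / (q : ℝ) ^ (m * (i + 1))))) atTop (nhds 1) := by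
      refine prods_tendsto_one fun i hi => aux_G _ _ ?_ ?_
      · have := mem_range.mp hi
        have : 0 < T - i := by omega
        positivity
      · positivity
    have h3 := h1.mul h2
    rw [one_mul] at h3
    refine h3.congr' ?_
    filter_upwards [eventually_ge_atTop 1] with q hq
    rw [prod_div_distrib, prod_div_distrib, prod_const, card_range, div_mul_div_comm,
      keyR q hq]
  -- combine
  have hfinal := hN.div hD one_ne_zero
  rw [div_one] at hfinal
  refine hfinal.congr' ?_
  filter_upwards [eventually_ge_atTop 1] with q hq
  have hx0 : ((q : ℝ)) ≠ 0 := by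
    have : (0 : ℝ) < (q : ℝ) := by exact_mod_cast Nat.lt_of_lt_of_le Nat.zero_lt_one hq
    exact this.ne'
  exact div_div_div_cancel_right₀ (pow_ne_zero _ hx0) _ _
end
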